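/- arXiv:1711.09391 — 8 statements merged into one kernel-verified Lean document; each statement's English description precedes it below -/
import Mathlib

section
/- The vector Z = (x(y−z)², y(x−z)², z(x−y)²)ᵀ is a fixed point (eigenvector) of the matrix product T₁·K⁻¹, i.e., T₁·K⁻¹·Z = λ·Z for some nonzero scalar λ (in fact λ = (y+z)(x+y)(x+z) up to normalization of K⁻¹). -/
/-- `Z = (x(y−z)², y(x−z)², z(x−y)²)ᵀ` is an eigenvector of `T₁ · K⁻¹` with nonzero
eigenvalue `(y+z)(x+y)(x+z)`. -/
theorem stmt_4 {F : Type*} [Field F] (x y z : F)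
    (hx : x ≠ 0) (hy : y ≠ 0) (hz : z ≠ 0)
    (hxy : x + y ≠ 0) (hyz : y + z ≠ 0) (hxz : x + z ≠ 0)
    (x' y' z' : F) (hx' : x' = x * (y + z)) (hy' : y' = y * (z + x)) (hz' : z' = z * (x + y))
    (T₁ Kinv : Matrix (Fin 3) (Fin 3) F)
    (hT₁ : T₁ = !![0, x' * (x + y), x' * (x + z);
                   y' * (x + y), 0, y' * (y + z);
                   z' * (x + z), z' * (y + z), 0])
    (hKinv : Kinv = !![-1, 1, 1; 1, -1, 1; 1, 1, -1]) :
    (T₁ * Kinv).mulVec ![x * (y - z) ^ 2, y * (x - z) ^ 2, z * (x - y) ^ 2]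
      = ((y + z) * (x + y) * (x + z)) •
          ![x * (y - z) ^ 2, y * (x - z) ^ 2, z * (x - y) ^ 2] ∧
    (y + z) * (x + y) * (x + z) ≠ 0 := by
  subst hx' hy' hz' hT₁ hKinv
  constructor
  · funext i
    fin_cases i <;>
      simp [Matrix.mulVec, Matrix.mul_apply, Fin.sum_univ_three, dotProduct] <;> ring
  · exact mul_ne_zero (mul_ne_zero hyz hxy) hxz
end

section
/- The vector Z = (x(y−z)², y(x−z)², z(x−y)²)ᵀ is a fixed point of T₂·K⁻¹ up to scalar: T₂·K⁻¹·Z = μ·Z for some nonzero scalar μ. -/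
/-- `Z = (x(y−z)², y(x−z)², z(x−y)²)ᵀ` is a fixed point of `T₂ · K⁻¹` up to a nonzero scalar. -/
theorem stmt_5 {F : Type*} [Field F] (x y z : F)
    (hx : x ≠ 0) (hy : y ≠ 0) (hz : z ≠ 0)
    (hxy : x + y ≠ 0) (hyz : y + z ≠ 0) (hxz : x + z ≠ 0)
    (x' y' z' : F) (hx' : x' = x * (y + z)) (hy' : y' = y * (z + x)) (hz' : z' = z * (x + y))
    (T₂ Kinv : Matrix (Fin 3) (Fin 3) F)
    (hT₂ : T₂ = !![0, z' * (y + z), y' * (y + z);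
                   z' * (x + z), 0, x' * (x + z);
                   y' * (x + y), x' * (x + y), 0])
    (hKinv : Kinv = !![-1, 1, 1; 1, -1, 1; 1, 1, -1]) :
    ∃ μ : F, μ ≠ 0 ∧
      (T₂ * Kinv).mulVec ![x * (y - z) ^ 2, y * (x - z) ^ 2, z * (x - y) ^ 2]
        = μ • ![x * (y - z) ^ 2, y * (x - z) ^ 2, z * (x - y) ^ 2] := by
  refine ⟨(x + y) * (y + z) * (x + z), mul_ne_zero (mul_ne_zero hxy hyz) hxz, ?_⟩
  subst hx' hy' hz' hT₂ hKinv
  funext i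
  fin_cases i <;>
    simp [Matrix.mulVec, Matrix.mul_apply, Fin.sum_univ_succ, dotProduct] <;>
    ring
end

section
/- In a triangle ABC, let D, E, F be the incircle tangency points on BC, CA, AB, and let D', E', F' be the reflections of D, E, F in the midpoints of BC, CA, AB respectively. Then the cevians AD', BE', CF' are concurrent. -/
open scoped RealInnerProductSpace

lemma stmt_9_sqe {p q : ℝ} (hp : 0 ≤ p) (hq : 0 ≤ q) (h : p ^ 2 = q ^ 2) : p = q := by
  nlinarith [sq_nonneg (p - q), sq_nonneg (p + q)]

lemma stmt_9_tangent_aux {U V Q P : EuclideanSpace ℝ (Fin 2)} {r : ℝ}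
    (hP : P ∈ segment ℝ U V) (hQP : dist Q P = r) (hperp : ⟪Q - P, V - U⟫ = 0) :
    ∃ t : ℝ, 0 ≤ t ∧ t ≤ 1 ∧ P = AffineMap.lineMap U V t ∧
      dist U Q ^ 2 = (t * dist U V) ^ 2 + r ^ 2 ∧
      dist V Q ^ 2 = ((1 - t) * dist U V) ^ 2 + r ^ 2 := by
  rw [segment_eq_image_lineMap] at hP
  obtain ⟨t, ⟨ht0, ht1⟩, hPt⟩ := hP
  refine ⟨t, ht0, ht1, hPt.symm, ?_, ?_⟩
  · have h1 : U - Q = (U - P) - (Q - P) := by abel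
    have h2 : U - P = (-t) • (V - U) := by
      rw [← hPt, AffineMap.lineMap_apply_module]; module
    have h3 : ⟪U - P, Q - P⟫ = 0 := by
      rw [h2, inner_smul_left, real_inner_comm, hperp]; simp
    have h4 : ‖U - P‖ = t * dist U V := by
      rw [h2, norm_smul, dist_eq_norm]
      have : ‖V - U‖ = ‖U - V‖ := by rw [norm_sub_rev]
      simp [this, abs_of_nonneg ht0]
    have : dist U Q ^ 2 = ‖(U - P) - (Q - P)‖ ^ 2 := by rw [dist_eq_norm, ← h1]
    rw [this, norm_sub_sq_real, h3, h4, ← dist_eq_norm Q P, hQP]; ring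
  · have h1 : V - Q = (V - P) - (Q - P) := by abel
    have h2 : V - P = (1 - t) • (V - U) := by
      rw [← hPt, AffineMap.lineMap_apply_module]; module
    have h3 : ⟪V - P, Q - P⟫ = 0 := by
      rw [h2, inner_smul_left, real_inner_comm, hperp]; simp
    have h4 : ‖V - P‖ = (1 - t) * dist U V := by
      rw [h2, norm_smul, dist_eq_norm]
      have : ‖V - U‖ = ‖U - V‖ := by rw [norm_sub_rev]
      simp [this, abs_of_nonneg (by linarith : (0:ℝ) ≤ 1 - t)]
    have : dist V Q ^ 2 = ‖(V - P) - (Q - P)‖ ^ 2 := by rw [dist_eq_norm, ← h1]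
    rw [this, norm_sub_sq_real, h3, h4, ← dist_eq_norm Q P, hQP]; ring

/-- Let `D, E, F` be the incircle tangency points of triangle `ABC` on `BC, CA, AB`, and
`D', E', F'` their reflections in the midpoints of the corresponding sides.  Then the
cevians `AD', BE', CF'` are concurrent (at the Nagel point). -/
theorem stmt_9 (A B C Q D E F D' E' F' : EuclideanSpace ℝ (Fin 2))
    (hABC : AffineIndependent ℝ ![A, B, C]) (r : ℝ) (hr : 0 < r)
    (hD : D ∈ segment ℝ B C) (hQD : dist Q D = r) (hDperp : ⟪Q - D, C - B⟫ = 0)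
    (hE : E ∈ segment ℝ C A) (hQE : dist Q E = r) (hEperp : ⟪Q - E, A - C⟫ = 0)
    (hF : F ∈ segment ℝ A B) (hQF : dist Q F = r) (hFperp : ⟪Q - F, B - A⟫ = 0)
    (hD' : D' = Equiv.pointReflection (midpoint ℝ B C) D)
    (hE' : E' = Equiv.pointReflection (midpoint ℝ C A) E)
    (hF' : F' = Equiv.pointReflection (midpoint ℝ A B) F) :
    ∃ X : EuclideanSpace ℝ (Fin 2),
      X ∈ affineSpan ℝ {A, D'} ∧ X ∈ affineSpan ℝ {B, E'} ∧ X ∈ affineSpan ℝ {C, F'} := by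
  obtain ⟨u, hu0, hu1, hDu, hBQ, hCQ⟩ := stmt_9_tangent_aux hD hQD hDperp
  obtain ⟨v, hv0, hv1, hEv, hCQ', hAQ⟩ := stmt_9_tangent_aux hE hQE hEperp
  obtain ⟨w, hw0, hw1, hFw, hAQ', hBQ'⟩ := stmt_9_tangent_aux hF hQF hFperp
  set a := dist B C with ha
  set b := dist C A with hb
  set c := dist A B with hc
  have hBC : B ≠ C := by
    intro h
    exact (by decide : (1:Fin 3) ≠ 2) (hABC.injective (by simpa using h))
  have hCA : C ≠ A := by
    intro h
    exact (by decide : (2:Fin 3) ≠ 0) (hABC.injective (by simpa using h))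
  have hAB : A ≠ B := by
    intro h
    exact (by decide : (0:Fin 3) ≠ 1) (hABC.injective (by simpa using h))
  have hapos : 0 < a := dist_pos.2 hBC
  have hbpos : 0 < b := dist_pos.2 hCA
  have hcpos : 0 < c := dist_pos.2 hAB
  -- equal tangent lengths
  have h1 : (1 - v) * b = w * c :=
    stmt_9_sqe (mul_nonneg (by linarith) hbpos.le) (mul_nonneg hw0 hcpos.le)
      (by linarith [hAQ, hAQ'])
  have h2 : (1 - w) * c = u * a :=
    stmt_9_sqe (mul_nonneg (by linarith) hcpos.le) (mul_nonneg hu0 hapos.le)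
      (by linarith [hBQ', hBQ])
  have h3 : (1 - u) * a = v * b :=
    stmt_9_sqe (mul_nonneg (by linarith) hapos.le) (mul_nonneg hv0 hbpos.le)
      (by linarith [hCQ, hCQ'])
  set s : ℝ := u * a + v * b + w * c with hs
  have hspos : 0 < s := by
    have hmid : u * a + v * b = a := by linarith
    have hwc : 0 ≤ w * c := mul_nonneg hw0 hcpos.le
    linarith
  have hsne : s ≠ 0 := hspos.ne'
  have ka : s - a = w * c := by linarith
  have kb : s - b = u * a := by linarith
  have kc : s - c = v * b := by linarith
  refine ⟨AffineMap.lineMap A D' (a / s), AffineMap.lineMap_mem_affineSpan_pair _ _ _, ?_, ?_⟩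
  · have key : AffineMap.lineMap A D' (a / s) = AffineMap.lineMap B E' (b / s) := by
      subst hD' hE' hDu hEv
      simp only [AffineMap.lineMap_apply_module, Equiv.pointReflection_apply,
        vsub_eq_sub, vadd_eq_add, midpoint_eq_smul_add, invOf_eq_inv]
      match_scalars
      · field_simp
        linear_combination 2 * ka - 2 * h1
      · field_simp
        linear_combination (-2) * kb
      · field_simp
        linear_combination 2 * h3
    rw [key]
    exact AffineMap.lineMap_mem_affineSpan_pair _ _ _
  · have key : AffineMap.lineMap A D' (a / s) = AffineMap.lineMap C F' (c / s) := by
      subst hD' hF' hDu hFw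
      simp only [AffineMap.lineMap_apply_module, Equiv.pointReflection_apply,
        vsub_eq_sub, vadd_eq_add, midpoint_eq_smul_add, invOf_eq_inv]
      match_scalars
      · field_simp
        linear_combination 2 * ka
      · field_simp
        linear_combination (-2) * h2
      · field_simp
        linear_combination 2 * (h3 - kc)
    rw [key]
    exact AffineMap.lineMap_mem_affineSpan_pair _ _ _
end

section
/- The incenter of triangle ABC is the orthocenter of its excentral triangle A'B'C': the line through the incenter Q and excenter A' is perpendicular to B'C', and similarly for the other two excenters. -/
open scoped RealInnerProductSpace

noncomputable abbrev sLine (X Y : EuclideanSpace ℝ (Fin 2)) : AffineSubspace ℝ (EuclideanSpace ℝ (Fin 2)) :=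
  affineSpan ℝ {X, Y}

/-- `Q` is the incenter of triangle `ABC`: it is equidistant (distance `ρ > 0`) from the three
side lines and lies strictly inside the triangle. -/
def IsIncenter (A B C Q : EuclideanSpace ℝ (Fin 2)) : Prop :=
  ∃ ρ : ℝ, 0 < ρ ∧
    Metric.infDist Q (sLine B C : Set (EuclideanSpace ℝ (Fin 2))) = ρ ∧
    Metric.infDist Q (sLine C A : Set (EuclideanSpace ℝ (Fin 2))) = ρ ∧
    Metric.infDist Q (sLine A B : Set (EuclideanSpace ℝ (Fin 2))) = ρ ∧
    (sLine B C).SSameSide Q A ∧ (sLine C A).SSameSide Q B ∧ (sLine A B).SSameSide Q C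

/-- `X` is the excenter of triangle `ABC` opposite the vertex `A`. -/
def IsExcenterOpp (A B C X : EuclideanSpace ℝ (Fin 2)) : Prop :=
  ∃ ρ : ℝ, 0 < ρ ∧
    Metric.infDist X (sLine B C : Set (EuclideanSpace ℝ (Fin 2))) = ρ ∧
    Metric.infDist X (sLine C A : Set (EuclideanSpace ℝ (Fin 2))) = ρ ∧
    Metric.infDist X (sLine A B : Set (EuclideanSpace ℝ (Fin 2))) = ρ ∧
    (sLine B C).SOppSide X A ∧ (sLine C A).SSameSide X B ∧ (sLine A B).SSameSide X C

/- ---------------------------------------------------------------------------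
Auxiliary material: a quarter-turn rotation in the plane, signed-distance
descriptions of lines, `infDist`, and the side predicates.
---------------------------------------------------------------------------- -/

local notation "V" => EuclideanSpace ℝ (Fin 2)

noncomputable def rot (v : V) : V := WithLp.toLp 2 ![-(v 1), v 0]

lemma inner_eq (x y : V) : ⟪x, y⟫ = x 0 * y 0 + x 1 * y 1 := by
  simp [PiLp.inner_apply, RCLike.inner_apply, Fin.sum_univ_two]; ring

@[simp] lemma rot0 (v : V) : rot v 0 = -(v 1) := rfl
@[simp] lemma rot1 (v : V) : rot v 1 = v 0 := rfl

lemma rot_rot (v : V) : rot (rot v) = -v := by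
  ext i; fin_cases i <;> simp [rot]

lemma rot_smul (c : ℝ) (v : V) : rot (c • v) = c • rot v := by
  ext i; fin_cases i <;> simp [rot, mul_comm]

lemma rot_sub (v w : V) : rot (v - w) = rot v - rot w := by
  ext i; fin_cases i <;> simp [rot] <;> ring

lemma rot_add (v w : V) : rot (v + w) = rot v + rot w := by
  ext i; fin_cases i <;> simp [rot] <;> ring

lemma inner_rot_rot (v w : V) : ⟪rot v, rot w⟫ = ⟪v, w⟫ := by
  simp [inner_eq]; ring

lemma inner_rot_self (v : V) : ⟪rot v, v⟫ = 0 := by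
  simp [inner_eq]; ring

lemma inner_self_rot (v : V) : ⟪v, rot v⟫ = 0 := by
  rw [real_inner_comm]; exact inner_rot_self v

lemma rot_ne_zero {v : V} (hv : v ≠ 0) : rot v ≠ 0 := by
  intro h
  apply hv
  ext i
  have h0 : rot v 0 = 0 := by rw [h]; rfl
  have h1 : rot v 1 = 0 := by rw [h]; rfl
  fin_cases i
  · simpa using h1
  · simpa using h0

lemma norm_rot (v : V) : ‖rot v‖ = ‖v‖ := by
  have h : ‖rot v‖ ^ 2 = ‖v‖ ^ 2 := by
    rw [← real_inner_self_eq_norm_sq, ← real_inner_self_eq_norm_sq, inner_rot_rot]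
  nlinarith [norm_nonneg (rot v), norm_nonneg v]

lemma exists_smul_rot {x v : V} (hv : v ≠ 0) (h : ⟪x, v⟫ = 0) : ∃ c : ℝ, x = c • rot v := by
  have h' : x 0 * v 0 + x 1 * v 1 = 0 := by rw [← inner_eq]; exact h
  have hv' : v 0 ≠ 0 ∨ v 1 ≠ 0 := by
    by_contra hc
    push_neg at hc
    exact hv (PiLp.ext fun i => by fin_cases i <;> simp [hc.1, hc.2])
  rcases hv' with h0 | h1
  · refine ⟨x 1 / v 0, PiLp.ext fun i => ?_⟩
    fin_cases i <;> simp [rot] <;> field_simp <;> nlinarith [h']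
  · refine ⟨-(x 0) / v 1, PiLp.ext fun i => ?_⟩
    fin_cases i <;> simp [rot] <;> field_simp <;> nlinarith [h']

lemma mem_sLine_iff {X Y P : V} : P ∈ sLine X Y ↔ ∃ r : ℝ, P - X = r • (Y - X) := by
  have h := @vadd_left_mem_affineSpan_pair ℝ _ _ _ _ _ _ X Y (P - X)
  simp only [vsub_eq_sub, vadd_eq_add, sub_add_cancel] at h
  rw [show sLine X Y = line[ℝ, X, Y] from rfl, h]
  exact ⟨fun ⟨r, hr⟩ => ⟨r, hr.symm⟩, fun ⟨r, hr⟩ => ⟨r, hr.symm⟩⟩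

lemma mem_sLine_iff_inner {X Y : V} (hXY : X ≠ Y) (P : V) :
    P ∈ sLine X Y ↔ ⟪P - X, rot (Y - X)⟫ = 0 := by
  rw [mem_sLine_iff]
  constructor
  · rintro ⟨r, hr⟩
    rw [hr, real_inner_smul_left, inner_self_rot, mul_zero]
  · intro h
    obtain ⟨c, hc⟩ := exists_smul_rot (rot_ne_zero (sub_ne_zero.2 hXY.symm)) h
    exact ⟨-c, by rw [hc, rot_rot, smul_neg, ← neg_smul]⟩

lemma infDist_sLine {X Y : V} (hXY : X ≠ Y) (P : V) :
    Metric.infDist P (sLine X Y : Set V) = |⟪P - X, rot (Y - X)⟫| / ‖Y - X‖ := by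
  set n := rot (Y - X) with hn
  have hYX : Y - X ≠ 0 := sub_ne_zero.2 hXY.symm
  have hnz : n ≠ 0 := rot_ne_zero hYX
  have hnn : ‖n‖ = ‖Y - X‖ := norm_rot _
  have hnpos : (0:ℝ) < ‖n‖ := norm_pos_iff.2 hnz
  set f : ℝ := ⟪P - X, n⟫ with hf
  apply le_antisymm
  · -- upper bound via foot of perpendicular
    set Z : V := P - (f / ‖n‖ ^ 2) • n with hZ
    have hZmem : Z ∈ sLine X Y := by
      rw [mem_sLine_iff_inner hXY]
      have : Z - X = (P - X) - (f / ‖n‖ ^ 2) • n := by rw [hZ]; abel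
      rw [this, inner_sub_left, real_inner_smul_left, ← hn, ← hf,
        real_inner_self_eq_norm_sq]
      field_simp
      ring
    have hd : dist P Z = |f| / ‖n‖ := by
      rw [dist_eq_norm, show P - Z = (f / ‖n‖ ^ 2) • n by rw [hZ]; abel, norm_smul,
        Real.norm_eq_abs, abs_div, abs_pow, abs_norm]
      rw [pow_two]
      field_simp
    calc Metric.infDist P (sLine X Y : Set V) ≤ dist P Z := Metric.infDist_le_dist_of_mem hZmem
    _ = |f| / ‖Y - X‖ := by rw [hd, hnn]
  · -- lower bound via Cauchy-Schwarz
    by_contra hlt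
    push_neg at hlt
    have hne : (sLine X Y : Set V).Nonempty :=
      ⟨X, left_mem_affineSpan_pair ℝ X Y⟩
    obtain ⟨Z', hZ', hdZ'⟩ := (Metric.infDist_lt_iff hne).1 hlt
    have hZi : ⟪Z' - X, n⟫ = 0 := (mem_sLine_iff_inner hXY Z').1 hZ'
    have h1 : ⟪P - Z', n⟫ = f := by
      rw [show P - Z' = (P - X) - (Z' - X) by abel, inner_sub_left, hZi, sub_zero]
    have h2 : |f| ≤ ‖P - Z'‖ * ‖n‖ := by
      rw [← h1]; exact abs_real_inner_le_norm _ _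
    rw [dist_eq_norm] at hdZ'
    rw [← hnn] at hdZ'
    rw [lt_div_iff₀ hnpos] at hdZ'
    linarith

lemma sameRay_smul_smul (n : V) {a b : ℝ} (h : 0 < a * b) : SameRay ℝ (a • n) (b • n) := by
  rcases mul_pos_iff.1 h with ⟨ha, hb⟩ | ⟨ha, hb⟩
  · exact Or.inr (Or.inr ⟨b, a, hb, ha, by rw [smul_smul, smul_smul, mul_comm]⟩)
  · exact Or.inr (Or.inr ⟨-b, -a, by linarith, by linarith,
      by rw [smul_smul, smul_smul]; ring_nf⟩)

lemma foot_mem {X Y : V} (hXY : X ≠ Y) (P : V) :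
    P - (⟪P - X, rot (Y - X)⟫ / ‖rot (Y - X)‖ ^ 2) • rot (Y - X) ∈ sLine X Y := by
  have hnz : rot (Y - X) ≠ 0 := rot_ne_zero (sub_ne_zero.2 hXY.symm)
  rw [mem_sLine_iff_inner hXY]
  rw [show P - (⟪P - X, rot (Y - X)⟫ / ‖rot (Y - X)‖ ^ 2) • rot (Y - X) - X
      = (P - X) - (⟪P - X, rot (Y - X)⟫ / ‖rot (Y - X)‖ ^ 2) • rot (Y - X) by abel,
    inner_sub_left, real_inner_smul_left, real_inner_self_eq_norm_sq]
  have : ‖rot (Y - X)‖ ≠ 0 := norm_ne_zero_iff.2 hnz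
  field_simp
  ring

lemma inner_sub_base {X Y : V} (hXY : X ≠ Y) {Z : V} (P : V) (hZ : Z ∈ sLine X Y) :
    ⟪P - Z, rot (Y - X)⟫ = ⟪P - X, rot (Y - X)⟫ := by
  rw [show P - Z = (P - X) - (Z - X) by abel, inner_sub_left,
    (mem_sLine_iff_inner hXY Z).1 hZ, sub_zero]

lemma not_mem_of_inner {X Y : V} (hXY : X ≠ Y) {P : V}
    (h : ⟪P - X, rot (Y - X)⟫ ≠ 0) : P ∉ sLine X Y :=
  fun hm => h ((mem_sLine_iff_inner hXY P).1 hm)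

lemma sSameSide_iff {X Y : V} (hXY : X ≠ Y) (P R : V) :
    (sLine X Y).SSameSide P R ↔ 0 < ⟪P - X, rot (Y - X)⟫ * ⟪R - X, rot (Y - X)⟫ := by
  set n := rot (Y - X) with hn
  have hnz : n ≠ 0 := rot_ne_zero (sub_ne_zero.2 hXY.symm)
  have hnorm : ‖n‖ ≠ 0 := norm_ne_zero_iff.2 hnz
  constructor
  · rintro ⟨⟨p₁, hp₁, p₂, hp₂, hray⟩, hP, hR⟩
    have hP0 : P -ᵥ p₁ ≠ 0 := by
      rw [vsub_eq_sub, sub_ne_zero]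
      rintro rfl; exact hP hp₁
    have hR0 : R -ᵥ p₂ ≠ 0 := by
      rw [vsub_eq_sub, sub_ne_zero]
      rintro rfl; exact hR hp₂
    obtain ⟨r₁, r₂, hr₁, hr₂, hr⟩ := hray.exists_pos hP0 hR0
    have e1 : ⟪P -ᵥ p₁, n⟫ = ⟪P - X, n⟫ := inner_sub_base hXY P hp₁
    have e2 : ⟪R -ᵥ p₂, n⟫ = ⟪R - X, n⟫ := inner_sub_base hXY R hp₂
    have e3 : r₁ * ⟪P - X, n⟫ = r₂ * ⟪R - X, n⟫ := by
      rw [← e1, ← e2, ← real_inner_smul_left, ← real_inner_smul_left, hr]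
    have hPne : ⟪P - X, n⟫ ≠ 0 := fun h => hP ((mem_sLine_iff_inner hXY P).2 h)
    rcases lt_trichotomy (⟪P - X, n⟫ : ℝ) 0 with hc | hc | hc
    · have : (⟪R - X, n⟫ : ℝ) < 0 := by nlinarith
      nlinarith
    · exact absurd hc hPne
    · have : (0:ℝ) < ⟪R - X, n⟫ := by nlinarith
      nlinarith
  · intro h
    have hPne : ⟪P - X, n⟫ ≠ 0 := fun hz => by rw [hz, zero_mul] at h; exact lt_irrefl 0 h
    have hRne : ⟪R - X, n⟫ ≠ 0 := fun hz => by rw [hz, mul_zero] at h; exact lt_irrefl 0 h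
    refine ⟨⟨P - (⟪P - X, n⟫ / ‖n‖ ^ 2) • n, foot_mem hXY P,
      R - (⟪R - X, n⟫ / ‖n‖ ^ 2) • n, foot_mem hXY R, ?_⟩,
      not_mem_of_inner hXY hPne, not_mem_of_inner hXY hRne⟩
    have e1 : P -ᵥ (P - (⟪P - X, n⟫ / ‖n‖ ^ 2) • n) = (⟪P - X, n⟫ / ‖n‖ ^ 2) • n := by
      rw [vsub_eq_sub]; abel
    have e2 : R -ᵥ (R - (⟪R - X, n⟫ / ‖n‖ ^ 2) • n) = (⟪R - X, n⟫ / ‖n‖ ^ 2) • n := by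
      rw [vsub_eq_sub]; abel
    rw [e1, e2]
    apply sameRay_smul_smul
    have h2 : (0:ℝ) < ‖n‖ ^ 2 := by positivity
    rw [div_mul_div_comm]
    positivity

lemma sOppSide_iff {X Y : V} (hXY : X ≠ Y) (P R : V) :
    (sLine X Y).SOppSide P R ↔ ⟪P - X, rot (Y - X)⟫ * ⟪R - X, rot (Y - X)⟫ < 0 := by
  set n := rot (Y - X) with hn
  have hnz : n ≠ 0 := rot_ne_zero (sub_ne_zero.2 hXY.symm)
  have hnorm : ‖n‖ ≠ 0 := norm_ne_zero_iff.2 hnz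
  constructor
  · rintro ⟨⟨p₁, hp₁, p₂, hp₂, hray⟩, hP, hR⟩
    have hP0 : P -ᵥ p₁ ≠ 0 := by
      rw [vsub_eq_sub, sub_ne_zero]
      rintro rfl; exact hP hp₁
    have hR0 : p₂ -ᵥ R ≠ 0 := by
      rw [vsub_eq_sub, sub_ne_zero]
      intro h; exact hR (h ▸ hp₂)
    obtain ⟨r₁, r₂, hr₁, hr₂, hr⟩ := hray.exists_pos hP0 hR0
    have e1 : ⟪P -ᵥ p₁, n⟫ = ⟪P - X, n⟫ := inner_sub_base hXY P hp₁
    have e2 : ⟪p₂ -ᵥ R, n⟫ = -⟪R - X, n⟫ := by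
      have : ⟪R -ᵥ p₂, n⟫ = ⟪R - X, n⟫ := inner_sub_base hXY R hp₂
      rw [show p₂ -ᵥ R = -(R -ᵥ p₂) by rw [vsub_eq_sub, vsub_eq_sub]; abel, inner_neg_left, this]
    have e3 : r₁ * ⟪P - X, n⟫ = r₂ * (-⟪R - X, n⟫) := by
      rw [← e1, ← e2, ← real_inner_smul_left, ← real_inner_smul_left, hr]
    have hPne : ⟪P - X, n⟫ ≠ 0 := fun h => hP ((mem_sLine_iff_inner hXY P).2 h)
    rcases lt_trichotomy (⟪P - X, n⟫ : ℝ) 0 with hc | hc | hc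
    · have : (0:ℝ) < ⟪R - X, n⟫ := by nlinarith
      nlinarith
    · exact absurd hc hPne
    · have : (⟪R - X, n⟫ : ℝ) < 0 := by nlinarith
      nlinarith
  · intro h
    have hPne : ⟪P - X, n⟫ ≠ 0 := fun hz => by rw [hz, zero_mul] at h; exact lt_irrefl 0 h
    have hRne : ⟪R - X, n⟫ ≠ 0 := fun hz => by rw [hz, mul_zero] at h; exact lt_irrefl 0 h
    refine ⟨⟨P - (⟪P - X, n⟫ / ‖n‖ ^ 2) • n, foot_mem hXY P,
      R - (⟪R - X, n⟫ / ‖n‖ ^ 2) • n, foot_mem hXY R, ?_⟩,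
      not_mem_of_inner hXY hPne, not_mem_of_inner hXY hRne⟩
    have e1 : P -ᵥ (P - (⟪P - X, n⟫ / ‖n‖ ^ 2) • n) = (⟪P - X, n⟫ / ‖n‖ ^ 2) • n := by
      rw [vsub_eq_sub]; abel
    have e2 : (R - (⟪R - X, n⟫ / ‖n‖ ^ 2) • n) -ᵥ R = (-⟪R - X, n⟫ / ‖n‖ ^ 2) • n := by
      rw [vsub_eq_sub, neg_div, neg_smul]; abel
    rw [e1, e2]
    apply sameRay_smul_smul
    have h2 : (0:ℝ) < ‖n‖ ^ 2 := by positivity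
    rw [div_mul_div_comm]
    have : (0:ℝ) < ⟪P - X, n⟫ * -⟪R - X, n⟫ := by nlinarith
    positivity

lemma sign_mul_eq_abs {x y : ℝ} (h : 0 < x * y) : x / |x| * y = |y| := by
  rcases mul_pos_iff.1 h with ⟨hx, hy⟩ | ⟨hx, hy⟩
  · rw [abs_of_pos hx, abs_of_pos hy, div_self hx.ne', one_mul]
  · rw [abs_of_neg hx, abs_of_neg hy, div_neg, div_self hx.ne, neg_one_mul]

lemma calc1 {a g nrm ρ : ℝ} (hpos : 0 < g * a) (hd : |g| / nrm = ρ) :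
    a / |a| / nrm * g = ρ := by
  rw [div_mul_eq_mul_div, sign_mul_eq_abs (by nlinarith), hd]

lemma calc2 {a g nrm ρ : ℝ} (hneg : g * a < 0) (hd : |g| / nrm = ρ) :
    a / |a| / nrm * g = -ρ := by
  rw [div_mul_eq_mul_div]
  have h2 : a / |a| * (-g) = |(-g)| := sign_mul_eq_abs (by nlinarith)
  rw [abs_neg] at h2
  have : a / |a| * g = -|g| := by linarith
  rw [this, neg_div, hd]

lemma one_eq {a r : ℝ} (ha : a ≠ 0) (hr : r ≠ 0) : (a / |a| / r) ^ 2 * r ^ 2 = 1 := by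
  rw [div_pow, div_pow, sq_abs]
  field_simp

lemma indep_comb {A B C : V} (hABC : AffineIndependent ℝ ![A, B, C]) {a b : ℝ}
    (ha : a ≠ 0) (hb : b ≠ 0) : a • (A - C) + b • (B - A) ≠ 0 := by
  intro h
  apply affineIndependent_iff_not_collinear.1 hABC
  have hr : Set.range ![A, B, C] = {A, B, C} := by
    ext x
    constructor
    · rintro ⟨i, rfl⟩
      fin_cases i <;> simp
    · intro hx
      rcases hx with h' | h' | h'
      exacts [⟨0, h'.symm⟩, ⟨1, h'.symm⟩, ⟨2, h'.symm⟩]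
  rw [hr, collinear_iff_of_mem (Set.mem_insert A {B, C})]
  refine ⟨C - A, fun p hp => ?_⟩
  have hBA : B - A = (a / b) • (C - A) := by
    have h' : b • (B - A) = a • (C - A) := by
      have e : a • (A - C) = -(a • (C - A)) := by rw [smul_sub, smul_sub, neg_sub]
      rw [e, neg_add_eq_sub, sub_eq_zero] at h
      exact h
    calc B - A = (b⁻¹ * b) • (B - A) := by rw [inv_mul_cancel₀ hb, one_smul]
    _ = b⁻¹ • (a • (C - A)) := by rw [mul_smul, h']
    _ = (a / b) • (C - A) := by rw [smul_smul, div_eq_inv_mul]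
  rcases hp with h' | h' | h'
  · exact ⟨0, by rw [h', zero_smul, zero_vadd]⟩
  · refine ⟨a / b, ?_⟩
    rw [h', vadd_eq_add, ← hBA]
    abel
  · exact ⟨1, by rw [h', one_smul, vadd_eq_add]; abel⟩

lemma key {A B C Q A' B' C' : V}
    (hABC : AffineIndependent ℝ ![A, B, C])
    (hQ : IsIncenter A B C Q)
    (hA' : IsExcenterOpp A B C A') (hB' : IsExcenterOpp B C A B')
    (hC' : IsExcenterOpp C A B C') :
    ⟪A' - Q, C' - B'⟫ = 0 := by
  have inj := hABC.injective
  have hCA : C ≠ A := fun h => by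
    have : (2 : Fin 3) = 0 := inj (by simpa using h)
    exact absurd this (by decide)
  have hAB : A ≠ B := fun h => by
    have : (0 : Fin 3) = 1 := inj (by simpa using h)
    exact absurd this (by decide)
  have hnu₁ : ‖A - C‖ ≠ 0 := norm_ne_zero_iff.2 (sub_ne_zero.2 hCA.symm)
  have hnu₂ : ‖B - A‖ ≠ 0 := norm_ne_zero_iff.2 (sub_ne_zero.2 hAB.symm)
  obtain ⟨ρ, hρ, _, hQ1, hQ2, _, hQ3, hQ4⟩ := hQ
  obtain ⟨ρ₁, hρ₁, _, hA1, hA2, _, hA3, hA4⟩ := hA'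
  obtain ⟨ρ₂, hρ₂, hB1, hB2, _, hB3, hB4, _⟩ := hB'
  obtain ⟨ρ₃, hρ₃, hC1, _, hC2, hC3, _, hC4⟩ := hC'
  rw [infDist_sLine hCA] at hQ1 hA1 hB1 hC2
  rw [infDist_sLine hAB] at hQ2 hA2 hB2 hC1
  rw [sSameSide_iff hCA] at hQ3 hA3 hC4
  rw [sSameSide_iff hAB] at hQ4 hA4 hB4
  rw [sOppSide_iff hCA] at hB3
  rw [sOppSide_iff hAB] at hC3
  set a : ℝ := ⟪B - C, rot (A - C)⟫ with hadef
  set b : ℝ := ⟪C - A, rot (B - A)⟫ with hbdef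
  have ha : a ≠ 0 := fun h => by rw [h, mul_zero] at hQ3; exact lt_irrefl 0 hQ3
  have hb : b ≠ 0 := fun h => by rw [h, mul_zero] at hQ4; exact lt_irrefl 0 hQ4
  set α : ℝ := a / |a| / ‖A - C‖ with hαdef
  set β : ℝ := b / |b| / ‖B - A‖ with hβdef
  have hα : α ≠ 0 := div_ne_zero (div_ne_zero ha (abs_ne_zero.2 ha)) hnu₁
  have hβ : β ≠ 0 := div_ne_zero (div_ne_zero hb (abs_ne_zero.2 hb)) hnu₂
  -- the four signed-distance relations
  have e1 : α * ⟪Q - C, rot (A - C)⟫ - β * ⟪Q - A, rot (B - A)⟫ = 0 := by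
    rw [hαdef, hβdef, calc1 hQ3 hQ1, calc1 hQ4 hQ2, sub_self]
  have e2 : α * ⟪A' - C, rot (A - C)⟫ - β * ⟪A' - A, rot (B - A)⟫ = 0 := by
    rw [hαdef, hβdef, calc1 hA3 hA1, calc1 hA4 hA2, sub_self]
  have e3 : α * ⟪B' - C, rot (A - C)⟫ + β * ⟪B' - A, rot (B - A)⟫ = 0 := by
    rw [hαdef, hβdef, calc2 hB3 hB1, calc1 hB4 hB2]
    ring
  have e4 : α * ⟪C' - C, rot (A - C)⟫ + β * ⟪C' - A, rot (B - A)⟫ = 0 := by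
    rw [hαdef, hβdef, calc1 hC4 hC2, calc2 hC3 hC1]
    ring
  -- perpendicularity to the two bisector normals
  have hm1 : ⟪A' - Q, α • rot (A - C) - β • rot (B - A)⟫ = 0 := by
    have d1 : ⟪A' - Q, rot (A - C)⟫ = ⟪A' - C, rot (A - C)⟫ - ⟪Q - C, rot (A - C)⟫ := by
      rw [← inner_sub_left]; congr 1; abel
    have d2 : ⟪A' - Q, rot (B - A)⟫ = ⟪A' - A, rot (B - A)⟫ - ⟪Q - A, rot (B - A)⟫ := by
      rw [← inner_sub_left]; congr 1; abel
    rw [inner_sub_right, real_inner_smul_right, real_inner_smul_right, d1, d2]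
    linear_combination e2 - e1
  have hm2 : ⟪C' - B', α • rot (A - C) + β • rot (B - A)⟫ = 0 := by
    have d1 : ⟪C' - B', rot (A - C)⟫ = ⟪C' - C, rot (A - C)⟫ - ⟪B' - C, rot (A - C)⟫ := by
      rw [← inner_sub_left]; congr 1; abel
    have d2 : ⟪C' - B', rot (B - A)⟫ = ⟪C' - A, rot (B - A)⟫ - ⟪B' - A, rot (B - A)⟫ := by
      rw [← inner_sub_left]; congr 1; abel
    rw [inner_add_right, real_inner_smul_right, real_inner_smul_right, d1, d2]
    linear_combination e4 - e3
  -- the two normals are mutually perpendicular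
  have hn1 : ⟪rot (A - C), rot (A - C)⟫ = ‖A - C‖ ^ 2 := by
    rw [real_inner_self_eq_norm_sq, norm_rot]
  have hn2 : ⟪rot (B - A), rot (B - A)⟫ = ‖B - A‖ ^ 2 := by
    rw [real_inner_self_eq_norm_sq, norm_rot]
  have h1 : α ^ 2 * ‖A - C‖ ^ 2 = 1 := by rw [hαdef]; exact one_eq ha hnu₁
  have h2 : β ^ 2 * ‖B - A‖ ^ 2 = 1 := by rw [hβdef]; exact one_eq hb hnu₂
  have hmm' : ⟪α • rot (A - C) + β • rot (B - A), α • rot (A - C) - β • rot (B - A)⟫ = 0 := by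
    have expand : ⟪α • rot (A - C) + β • rot (B - A), α • rot (A - C) - β • rot (B - A)⟫
        = α ^ 2 * ⟪rot (A - C), rot (A - C)⟫ - β ^ 2 * ⟪rot (B - A), rot (B - A)⟫
          + α * β * (⟪rot (B - A), rot (A - C)⟫ - ⟪rot (A - C), rot (B - A)⟫) := by
      rw [inner_sub_right, inner_add_left, inner_add_left, real_inner_smul_left,
        real_inner_smul_left, real_inner_smul_left, real_inner_smul_left,
        real_inner_smul_right, real_inner_smul_right, real_inner_smul_right,
        real_inner_smul_right]
      ring
    rw [expand, real_inner_comm (rot (B - A)) (rot (A - C)), sub_self, mul_zero, add_zero,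
      hn1, hn2, h1, h2, sub_self]
  -- nonvanishing of the normal combinations
  have hkey1 : α • (A - C) - β • (B - A) ≠ 0 := by
    have h := indep_comb hABC hα (neg_ne_zero.2 hβ)
    rw [neg_smul, ← sub_eq_add_neg] at h
    exact h
  have hkey2 : α • (A - C) + β • (B - A) ≠ 0 := indep_comb hABC hα hβ
  have hm_ne : α • rot (A - C) - β • rot (B - A) ≠ 0 := by
    rw [← rot_smul, ← rot_smul, ← rot_sub]
    exact rot_ne_zero hkey1
  have hm'_ne : α • rot (A - C) + β • rot (B - A) ≠ 0 := by
    rw [← rot_smul, ← rot_smul, ← rot_add]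
    exact rot_ne_zero hkey2
  -- finish
  obtain ⟨c, hc⟩ := exists_smul_rot hm_ne hmm'
  obtain ⟨c₁, hc₁⟩ := exists_smul_rot hm_ne hm1
  have hc0 : c ≠ 0 := by
    rintro rfl
    rw [zero_smul] at hc
    exact hm'_ne hc
  have hperp : ⟪rot (α • rot (A - C) - β • rot (B - A)), C' - B'⟫ = 0 := by
    rw [real_inner_comm]
    have h := hm2
    rw [hc, real_inner_smul_right] at h
    rcases mul_eq_zero.1 h with h' | h'
    · exact absurd h' hc0
    · exact h'
  rw [hc₁, real_inner_smul_left, hperp, mul_zero]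

lemma incenter_cyc {A B C Q : V} (h : IsIncenter A B C Q) : IsIncenter B C A Q := by
  obtain ⟨ρ, h0, h1, h2, h3, h4, h5, h6⟩ := h
  exact ⟨ρ, h0, h2, h3, h1, h5, h6, h4⟩

lemma affInd_cyc {A B C : V} (h : AffineIndependent ℝ ![A, B, C]) :
    AffineIndependent ℝ ![B, C, A] := by
  rw [affineIndependent_iff_not_collinear] at h ⊢
  intro hc
  apply h
  have hr : Set.range ![A, B, C] = Set.range ![B, C, A] := by
    ext x
    constructor
    · rintro ⟨i, rfl⟩
      fin_cases i
      exacts [⟨2, by simp⟩, ⟨0, by simp⟩, ⟨1, by simp⟩]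
    · rintro ⟨i, rfl⟩
      fin_cases i
      exacts [⟨1, by simp⟩, ⟨2, by simp⟩, ⟨0, by simp⟩]
  rw [hr]
  exact hc

/-- The incenter of `ABC` is the orthocenter of its excentral triangle `A'B'C'`:
each line joining the incenter to an excenter is perpendicular to the opposite side
of the excentral triangle. -/
theorem stmt_10 (A B C Q A' B' C' : EuclideanSpace ℝ (Fin 2))
    (hABC : AffineIndependent ℝ ![A, B, C])
    (hQ : IsIncenter A B C Q)
    (hA' : IsExcenterOpp A B C A') (hB' : IsExcenterOpp B C A B') (hC' : IsExcenterOpp C A B C') :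
    ⟪A' - Q, C' - B'⟫ = 0 ∧ ⟪B' - Q, C' - A'⟫ = 0 ∧ ⟪C' - Q, B' - A'⟫ = 0 := by
  have hABC2 := affInd_cyc hABC
  have hABC3 := affInd_cyc hABC2
  have hQ2 := incenter_cyc hQ
  have hQ3 := incenter_cyc hQ2
  refine ⟨key hABC hQ hA' hB' hC', ?_, key hABC3 hQ3 hC' hA' hB'⟩
  have h := key hABC2 hQ2 hB' hC' hA'
  rw [show C' - A' = -(A' - C') from (neg_sub _ _).symm, inner_neg_right, h, neg_zero]
end

section
/- The anticomplement map K⁻¹ (homothety with center the centroid G and ratio −2) maps the nine-point circle of triangle ABC onto the circumcircle of ABC. -/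
open EuclideanGeometry AffineMap

private lemma dist_homothety_homothety (c x y : EuclideanSpace ℝ (Fin 2)) (k : ℝ) :
    dist (AffineMap.homothety c k x) (AffineMap.homothety c k y) = |k| * dist x y := by
  simp only [AffineMap.homothety_apply, dist_eq_norm, vsub_eq_sub, vadd_eq_add]
  rw [show k • (x - c) + c - (k • (y - c) + c) = k • (x - y) by module]
  rw [norm_smul, Real.norm_eq_abs]

private lemma homothety_midpoint (A B C G : EuclideanSpace ℝ (Fin 2))
    (hG : G = (3 : ℝ)⁻¹ • (A + B + C)) :
    AffineMap.homothety G (-2 : ℝ) (midpoint ℝ B C) = A := by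
  subst hG
  simp only [AffineMap.homothety_apply, midpoint_eq_smul_add, vsub_eq_sub, vadd_eq_add,
    invOf_eq_inv]
  module

/-- The anticomplement map (the homothety with center the centroid `G` and ratio `−2`)
maps the nine-point circle of triangle `ABC` (the circle through the three side midpoints)
onto the circumcircle of `ABC`. -/
theorem stmt_14 (A B C n o : EuclideanSpace ℝ (Fin 2))
    (hABC : AffineIndependent ℝ ![A, B, C]) (ρ R : ℝ)
    -- nine-point circle: center `n`, radius `ρ`, through the side midpoints
    (hn1 : dist n (midpoint ℝ B C) = ρ) (hn2 : dist n (midpoint ℝ C A) = ρ)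
    (hn3 : dist n (midpoint ℝ A B) = ρ)
    -- circumcircle: center `o`, radius `R`
    (ho1 : dist o A = R) (ho2 : dist o B = R) (ho3 : dist o C = R)
    (G : EuclideanSpace ℝ (Fin 2)) (hG : G = (3 : ℝ)⁻¹ • (A + B + C)) :
    (AffineMap.homothety G (-2 : ℝ)) '' Metric.sphere n ρ = Metric.sphere o R := by
  set h : EuclideanSpace ℝ (Fin 2) → EuclideanSpace ℝ (Fin 2) :=
    ⇑(AffineMap.homothety G (-2 : ℝ)) with hh
  have hA : h (midpoint ℝ B C) = A := homothety_midpoint A B C G hG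
  have hB : h (midpoint ℝ C A) = B := by
    apply homothety_midpoint B C A G; rw [hG]; module
  have hC : h (midpoint ℝ A B) = C := by
    apply homothety_midpoint C A B G; rw [hG]; module
  have hdist : ∀ x y, dist (h x) (h y) = 2 * dist x y := by
    intro x y
    rw [hh, dist_homothety_homothety]
    norm_num
  -- the simplex
  set s : Affine.Simplex ℝ (EuclideanSpace ℝ (Fin 2)) 2 := ⟨![A, B, C], hABC⟩ with hs
  have hspan : affineSpan ℝ (Set.range s.points) = ⊤ := by
    rw [AffineIndependent.affineSpan_eq_top_iff_card_eq_finrank_add_one s.independent]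
    simp
  have hdA : dist A (h n) = 2 * ρ := by rw [← hA, dist_comm, hdist, hn1]
  have hdB : dist B (h n) = 2 * ρ := by rw [← hB, dist_comm, hdist, hn2]
  have hdC : dist C (h n) = 2 * ρ := by rw [← hC, dist_comm, hdist, hn3]
  have hr1 : ∀ i, dist (s.points i) (h n) = 2 * ρ := by
    intro i
    fin_cases i <;> simpa [hs] using (by assumption : _)
  have hr2 : ∀ i, dist (s.points i) o = R := by
    intro i
    have hpts : s.points i = ![A, B, C] i := rfl
    rw [hpts]
    fin_cases i <;>
      simp only [Matrix.cons_val_zero, Matrix.cons_val_one, Matrix.head_cons, Fin.mk_one,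
        Matrix.cons_val_two, Matrix.tail_cons, Fin.zero_eta, Fin.reduceFinMk] <;>
      rw [dist_comm] <;> assumption
  have hmem : ∀ p : EuclideanSpace ℝ (Fin 2), p ∈ affineSpan ℝ (Set.range s.points) := by
    intro p; rw [hspan]; trivial
  have hcn : h n = o := by
    rw [s.eq_circumcenter_of_dist_eq (hmem _) hr1, s.eq_circumcenter_of_dist_eq (hmem _) hr2]
  have hcr : 2 * ρ = R := by
    rw [s.eq_circumradius_of_dist_eq (hmem _) hr1, s.eq_circumradius_of_dist_eq (hmem _) hr2]
  ext x
  constructor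
  · rintro ⟨y, hy, rfl⟩
    rw [Metric.mem_sphere] at hy ⊢
    rw [← hcn, hdist, hy, hcr]
  · intro hx
    rw [Metric.mem_sphere] at hx
    refine ⟨AffineMap.homothety G (-(2:ℝ))⁻¹ x, ?_, ?_⟩
    · rw [Metric.mem_sphere]
      have := hdist (AffineMap.homothety G (-(2:ℝ))⁻¹ x) n
      have h2 : h (AffineMap.homothety G (-(2:ℝ))⁻¹ x) = x := by
        rw [hh, ← AffineMap.homothety_mul_apply]
        norm_num
      rw [h2, hcn, hx, ← hcr] at this
      linarith
    · rw [hh, ← AffineMap.homothety_mul_apply]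
      norm_num
end

section
/- The circumcircle of triangle ABC is the nine-point circle of the excentral triangle A'B'C'. -/
local notation "V2" => EuclideanSpace ℝ (Fin 2)

noncomputable def Jv (v : V2) : V2 := !₂[-(v 1), v 0]

lemma inner2 (x y : V2) : (inner ℝ x y : ℝ) = x 0 * y 0 + x 1 * y 1 := by
  simp [PiLp.inner_apply, Fin.sum_univ_two, RCLike.inner_apply]
  ring

lemma inner_Jv_self (v : V2) : (inner ℝ v (Jv v) : ℝ) = 0 := by
  rw [inner2]; show v 0 * -(v 1) + v 1 * (v 0) = 0; ring

lemma norm_Jv (v : V2) : ‖Jv v‖ = ‖v‖ := by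
  have h : (inner ℝ (Jv v) (Jv v) : ℝ) = inner ℝ v v := by
    rw [inner2, inner2]
    show -(v 1) * -(v 1) + v 0 * v 0 = _; ring
  rw [real_inner_self_eq_norm_sq, real_inner_self_eq_norm_sq] at h
  nlinarith [norm_nonneg (Jv v), norm_nonneg v]

lemma Jv_eq_zero_iff (v : V2) : Jv v = 0 ↔ v = 0 := by
  constructor
  · intro h; have := norm_Jv v; rw [h, norm_zero] at this
    exact norm_eq_zero.mp this.symm
  · intro h; subst h
    have : ‖Jv (0 : V2)‖ = 0 := by rw [norm_Jv, norm_zero]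
    exact norm_eq_zero.mp this

lemma perp_span (n x : V2) (hn : n ≠ 0) (hx : (inner ℝ x n : ℝ) = 0) :
    ∃ t : ℝ, x = t • Jv n := by
  have hnn : n 0 ^ 2 + n 1 ^ 2 ≠ 0 := by
    intro h
    apply hn
    have h0 : n 0 = 0 := by nlinarith [sq_nonneg (n 0), sq_nonneg (n 1)]
    have h1 : n 1 = 0 := by nlinarith [sq_nonneg (n 0), sq_nonneg (n 1)]
    ext i; fin_cases i <;> simp [h0, h1]
  rw [inner2] at hx
  refine ⟨(x 1 * n 0 - x 0 * n 1) / (n 0 ^ 2 + n 1 ^ 2), ?_⟩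
  ext i
  fin_cases i <;>
    simp only [Jv, PiLp.smul_apply, smul_eq_mul, Matrix.cons_val_zero, Matrix.cons_val_one,
      Matrix.head_cons, Fin.isValue, PiLp.toLp_apply, Fin.zero_eta, Fin.mk_one] <;>
    field_simp
  · linear_combination (n 0) * hx
  · linear_combination (n 1) * hx

lemma mem_line_iff (P Q X : V2) : X ∈ sLine P Q ↔ ∃ r : ℝ, r • (Q - P) = X - P := by
  have h := vadd_left_mem_affineSpan_pair (k := ℝ) (p₁ := P) (p₂ := Q) (v := X - P)
  simp only [vsub_eq_sub, vadd_eq_add, sub_add_cancel] at h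
  exact h

lemma inner_eq_of_mem_line (P Q X Y : V2) (hY : Y ∈ sLine P Q) :
    (inner ℝ (X - Y) (Jv (Q - P)) : ℝ) = inner ℝ (X - P) (Jv (Q - P)) := by
  obtain ⟨r, hr⟩ := (mem_line_iff P Q Y).mp hY
  have : X - Y = (X - P) - (r • (Q - P)) := by rw [hr]; abel
  rw [this, inner_sub_left, real_inner_smul_left, inner_Jv_self, mul_zero, sub_zero]

lemma mem_line_of_inner_eq_zero (P Q X : V2) (hPQ : Q - P ≠ 0)
    (h : (inner ℝ (X - P) (Jv (Q - P)) : ℝ) = 0) : X ∈ sLine P Q := by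
  obtain ⟨t, ht⟩ := perp_span (Jv (Q - P)) (X - P) ((Jv_eq_zero_iff _).ne.mpr hPQ) h
  rw [mem_line_iff]
  refine ⟨-t, ?_⟩
  have hJJ : Jv (Jv (Q - P)) = -(Q - P) := by
    ext i; fin_cases i <;> simp [Jv]
  rw [ht, hJJ]
  module

lemma infDist_line (P Q X : V2) (hPQ : Q - P ≠ 0) :
    Metric.infDist X (sLine P Q : Set V2) = |(inner ℝ (X - P) (Jv (Q - P)) : ℝ)| / ‖Q - P‖ := by
  set n := Jv (Q - P) with hn
  have hnne : n ≠ 0 := (Jv_eq_zero_iff _).ne.mpr hPQ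
  have hnorm : ‖n‖ = ‖Q - P‖ := norm_Jv _
  have hnn : ‖n‖ ≠ 0 := by rw [hnorm]; exact norm_ne_zero_iff.mpr hPQ
  set a : ℝ := inner ℝ (X - P) n with ha
  set F : V2 := X - (a / ‖n‖ ^ 2) • n with hF
  have hFmem : F ∈ sLine P Q := by
    apply mem_line_of_inner_eq_zero P Q F hPQ
    have : F - P = (X - P) - (a / ‖n‖ ^ 2) • n := by rw [hF]; abel
    rw [this, inner_sub_left, real_inner_smul_left, real_inner_self_eq_norm_sq, ← ha]
    field_simp
    ring
  have hdistF : dist X F = |a| / ‖Q - P‖ := by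
    rw [dist_eq_norm]
    have : X - F = (a / ‖n‖ ^ 2) • n := by rw [hF]; abel
    rw [this, norm_smul, Real.norm_eq_abs, abs_div,
      abs_of_nonneg (by positivity : (0:ℝ) ≤ ‖n‖ ^ 2), ← hnorm]
    field_simp
  apply le_antisymm
  · rw [← hdistF]; exact Metric.infDist_le_dist_of_mem hFmem
  · by_contra hlt
    push_neg at hlt
    obtain ⟨Y, hYmem, hYd⟩ :=
      (Metric.infDist_lt_iff ⟨P, mem_affineSpan ℝ (Set.mem_insert _ _)⟩).mp hlt
    have h1 : |a| = |(inner ℝ (X - Y) n : ℝ)| := by rw [ha, inner_eq_of_mem_line P Q X Y hYmem]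
    have h2 : |(inner ℝ (X - Y) n : ℝ)| ≤ ‖X - Y‖ * ‖n‖ := abs_real_inner_le_norm _ _
    rw [← dist_eq_norm, hnorm] at h2
    have h3 : |a| / ‖Q - P‖ ≤ dist X Y := by
      rw [div_le_iff₀ (by rw [← hnorm]; positivity)]
      calc |a| = _ := h1
        _ ≤ _ := h2
    linarith

lemma sSameSide_pos (P Q X Y : V2) (hPQ : Q - P ≠ 0)
    (h : (sLine P Q).SSameSide X Y) :
    0 < (inner ℝ (X - P) (Jv (Q - P)) : ℝ) * (inner ℝ (Y - P) (Jv (Q - P)) : ℝ) := by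
  set n := Jv (Q - P) with hn
  obtain ⟨⟨p1, hp1, p2, hp2, hray⟩, hx, hy⟩ := h
  have ha : (inner ℝ (X - P) n : ℝ) ≠ 0 := fun h0 => hx (mem_line_of_inner_eq_zero P Q X hPQ h0)
  have hb : (inner ℝ (Y - P) n : ℝ) ≠ 0 := fun h0 => hy (mem_line_of_inner_eq_zero P Q Y hPQ h0)
  rcases hray with h0 | h0 | ⟨r1, r2, hr1, hr2, hr⟩
  · exact absurd (vsub_eq_zero_iff_eq.mp h0 ▸ hp1) hx
  · exact absurd (vsub_eq_zero_iff_eq.mp h0 ▸ hp2) hy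
  · have e1 : (inner ℝ (X -ᵥ p1) n : ℝ) = inner ℝ (X - P) n := inner_eq_of_mem_line P Q X p1 hp1
    have e2 : (inner ℝ (Y -ᵥ p2) n : ℝ) = inner ℝ (Y - P) n := inner_eq_of_mem_line P Q Y p2 hp2
    have hinner : r1 * (inner ℝ (X - P) n : ℝ) = r2 * (inner ℝ (Y - P) n : ℝ) := by
      rw [← e1, ← e2, ← real_inner_smul_left, ← real_inner_smul_left, hr]
    have hb2 : 0 < (inner ℝ (Y - P) n : ℝ) ^ 2 := by positivity
    have key : r1 * ((inner ℝ (X - P) n : ℝ) * (inner ℝ (Y - P) n : ℝ)) =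
        r2 * (inner ℝ (Y - P) n : ℝ) ^ 2 := by linear_combination (inner ℝ (Y - P) n : ℝ) * hinner
    nlinarith [mul_pos hr2 hb2]

lemma sOppSide_neg (P Q X Y : V2) (hPQ : Q - P ≠ 0)
    (h : (sLine P Q).SOppSide X Y) :
    (inner ℝ (X - P) (Jv (Q - P)) : ℝ) * (inner ℝ (Y - P) (Jv (Q - P)) : ℝ) < 0 := by
  set n := Jv (Q - P) with hn
  obtain ⟨⟨p1, hp1, p2, hp2, hray⟩, hx, hy⟩ := h
  have ha : (inner ℝ (X - P) n : ℝ) ≠ 0 := fun h0 => hx (mem_line_of_inner_eq_zero P Q X hPQ h0)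
  have hb : (inner ℝ (Y - P) n : ℝ) ≠ 0 := fun h0 => hy (mem_line_of_inner_eq_zero P Q Y hPQ h0)
  rcases hray with h0 | h0 | ⟨r1, r2, hr1, hr2, hr⟩
  · exact absurd (vsub_eq_zero_iff_eq.mp h0 ▸ hp1) hx
  · have : p2 = Y := vsub_eq_zero_iff_eq.mp h0
    exact absurd (this ▸ hp2) hy
  · have e1 : (inner ℝ (X -ᵥ p1) n : ℝ) = inner ℝ (X - P) n := inner_eq_of_mem_line P Q X p1 hp1
    have e2 : (inner ℝ (p2 -ᵥ Y) n : ℝ) = -(inner ℝ (Y - P) n : ℝ) := by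
      have h1 : (p2 -ᵥ Y : V2) = -(Y - p2) := by rw [vsub_eq_sub, neg_sub]
      rw [h1, inner_neg_left, inner_eq_of_mem_line P Q Y p2 hp2]
    have hinner : r1 * (inner ℝ (X - P) n : ℝ) = r2 * (-(inner ℝ (Y - P) n : ℝ)) := by
      rw [← e1, ← e2, ← real_inner_smul_left, ← real_inner_smul_left, hr]
    have hb2 : 0 < (inner ℝ (Y - P) n : ℝ) ^ 2 := by positivity
    have key : r1 * ((inner ℝ (X - P) n : ℝ) * (inner ℝ (Y - P) n : ℝ)) =
        -(r2 * (inner ℝ (Y - P) n : ℝ) ^ 2) := by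
      linear_combination (inner ℝ (Y - P) n : ℝ) * hinner
    nlinarith [mul_pos hr2 hb2]

lemma inner_Jv_skew (u v : V2) : (inner ℝ u (Jv v) : ℝ) = -(inner ℝ v (Jv u) : ℝ) := by
  rw [inner2, inner2]
  show u 0 * -(v 1) + u 1 * (v 0) = -((v 0) * -(u 1) + v 1 * (u 0))
  ring

lemma range_triple (A B C : V2) : Set.range ![A, B, C] = {A, B, C} := by
  simp only [Matrix.range_cons, Matrix.range_cons_empty, Matrix.range_empty,
    Set.union_empty]
  ext x
  simp only [Set.mem_union, Set.mem_singleton_iff, Set.mem_insert_iff]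

lemma cr_cycle (A B C : V2) :
    (inner ℝ (C - A) (Jv (B - A)) : ℝ) = inner ℝ (A - B) (Jv (C - B)) := by
  rw [inner2, inner2]
  show (C 0 - A 0) * -(B 1 - A 1) + (C 1 - A 1) * (B 0 - A 0) =
    (A 0 - B 0) * -(C 1 - B 1) + (A 1 - B 1) * (C 0 - B 0)
  ring

lemma collinear_of_rel (A B C : V2) (t : ℝ) (h : C - A = t • (B - A)) :
    Collinear ℝ ({A, B, C} : Set V2) := by
  rw [collinear_iff_of_mem (Set.mem_insert A _)]
  refine ⟨B - A, ?_⟩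
  intro p hp
  rcases hp with rfl | rfl | rfl
  · exact ⟨0, by simp⟩
  · exact ⟨1, by simp [vadd_eq_add]⟩
  · exact ⟨t, by rw [← h, vadd_eq_add, sub_add_cancel]⟩

lemma cross_ne_of_affineIndependent {A B C : V2} (h : AffineIndependent ℝ ![A, B, C]) :
    (inner ℝ (C - A) (Jv (B - A)) : ℝ) ≠ 0 := by
  intro hc
  have hncol := affineIndependent_iff_not_collinear.mp h
  rw [range_triple] at hncol
  apply hncol
  rcases eq_or_ne (B - A) 0 with hu | hu
  · have hBA : B = A := sub_eq_zero.mp hu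
    rw [hBA, Set.insert_comm, Set.insert_idem]
    exact collinear_pair ℝ A C
  · obtain ⟨t, ht⟩ := perp_span (Jv (B - A)) (C - A) ((Jv_eq_zero_iff _).ne.mpr hu) hc
    have hJJ : Jv (Jv (B - A)) = -(B - A) := by
      ext i; fin_cases i <;> simp [Jv]
    rw [hJJ] at ht
    exact collinear_of_rel A B C (-t) (by rw [ht]; module)

lemma signed_eq {a b nu nv e r : ℝ} (hnu : 0 < nu) (hnv : 0 < nv)
    (h1 : |a| / nu = r) (h2 : |b| / nv = r) (h3 : 0 < a * e) (h4 : 0 < b * e) :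
    nv * a = nu * b := by
  have ha : |a| = r * nu := by field_simp at h1; linarith
  have hb : |b| = r * nv := by field_simp at h2; linarith
  rcases lt_trichotomy e 0 with he | he | he
  · have ha' : a < 0 := by nlinarith
    have hb' : b < 0 := by nlinarith
    rw [abs_of_neg ha'] at ha
    rw [abs_of_neg hb'] at hb
    linear_combination nu * hb - nv * ha
  · rw [he, mul_zero] at h3; exact absurd h3 (lt_irrefl 0)
  · have ha' : 0 < a := by nlinarith
    have hb' : 0 < b := by nlinarith
    rw [abs_of_pos ha'] at ha
    rw [abs_of_pos hb'] at hb
    linear_combination nv * ha - nu * hb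
set_option maxHeartbeats 2000000 in
lemma vertex (A B C A' B' C' : V2)
    (hcr : (inner ℝ (C - A) (Jv (B - A)) : ℝ) ≠ 0)
    (hA' : IsExcenterOpp A B C A') (hB' : IsExcenterOpp B C A B')
    (hC' : IsExcenterOpp C A B C') :
    (∃ (k : V2) (t1 t2 : ℝ), k ≠ 0 ∧ B' - A = t1 • k ∧ C' - A = t2 • k ∧ t1 ≠ t2) ∧
      (inner ℝ (A' - A) (B' - C') : ℝ) = 0 := by
  have hu : B - A ≠ 0 := by
    intro h0
    apply hcr
    rw [h0, show Jv (0 : V2) = 0 from (Jv_eq_zero_iff 0).mpr rfl, inner_zero_right]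
  have hv : C - A ≠ 0 := by
    intro h0
    apply hcr
    rw [h0, inner_zero_left]
  have hnu : (0:ℝ) < ‖B - A‖ := norm_pos_iff.mpr hu
  have hnv : (0:ℝ) < ‖C - A‖ := norm_pos_iff.mpr hv
  have hline : sLine C A = sLine A C := by
    exact congrArg (affineSpan ℝ) (Set.pair_comm C A)
  have hskew : (inner ℝ (B - A) (Jv (C - A)) : ℝ) = -(inner ℝ (C - A) (Jv (B - A)) : ℝ) :=
    inner_Jv_skew _ _
  obtain ⟨ρA, hρA, _, ha2, ha3, _, has2, has3⟩ := hA'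
  obtain ⟨ρB, hρB, hb1, hb2, _, hbs1, hbs2, _⟩ := hB'
  obtain ⟨ρC, hρC, hc1, _, hc3, hcs1, _, hcs3⟩ := hC'
  rw [hline] at ha2 hb1 hc3
  rw [hline] at has2 hbs1 hcs3
  -- distances
  have dB1 : |(inner ℝ (B' - A) (Jv (B - A)) : ℝ)| / ‖B - A‖ = ρB := by
    rw [← hb2, infDist_line A B B' hu]
  have dB2 : |(inner ℝ (B' - A) (Jv (C - A)) : ℝ)| / ‖C - A‖ = ρB := by
    rw [← hb1, infDist_line A C B' hv]
  have dC1 : |(inner ℝ (C' - A) (Jv (B - A)) : ℝ)| / ‖B - A‖ = ρC := by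
    rw [← hc1, infDist_line A B C' hu]
  have dC2 : |(inner ℝ (C' - A) (Jv (C - A)) : ℝ)| / ‖C - A‖ = ρC := by
    rw [← hc3, infDist_line A C C' hv]
  have dA1 : |(inner ℝ (A' - A) (Jv (B - A)) : ℝ)| / ‖B - A‖ = ρA := by
    rw [← ha3, infDist_line A B A' hu]
  have dA2 : |(inner ℝ (A' - A) (Jv (C - A)) : ℝ)| / ‖C - A‖ = ρA := by
    rw [← ha2, infDist_line A C A' hv]
  -- signs
  have sB1 : 0 < (inner ℝ (B' - A) (Jv (B - A)) : ℝ) * (inner ℝ (C - A) (Jv (B - A)) : ℝ) :=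
    sSameSide_pos A B B' C hu hbs2
  have sB2 : 0 < (inner ℝ (B' - A) (Jv (C - A)) : ℝ) * (inner ℝ (C - A) (Jv (B - A)) : ℝ) := by
    have h := sOppSide_neg A C B' B hv hbs1
    rw [hskew] at h
    nlinarith
  have sC1 : 0 < (inner ℝ (C' - A) (Jv (B - A)) : ℝ) * (-(inner ℝ (C - A) (Jv (B - A)) : ℝ)) := by
    have h := sOppSide_neg A B C' C hu hcs1
    nlinarith
  have sC2 : 0 < (inner ℝ (C' - A) (Jv (C - A)) : ℝ) * (-(inner ℝ (C - A) (Jv (B - A)) : ℝ)) := by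
    have h := sSameSide_pos A C C' B hv hcs3
    rw [hskew] at h
    nlinarith
  have sA1 : 0 < (inner ℝ (A' - A) (Jv (B - A)) : ℝ) * (inner ℝ (C - A) (Jv (B - A)) : ℝ) :=
    sSameSide_pos A B A' C hu has3
  have sA2 : 0 < (-(inner ℝ (A' - A) (Jv (C - A)) : ℝ)) * (inner ℝ (C - A) (Jv (B - A)) : ℝ) := by
    have h := sSameSide_pos A C A' B hv has2
    rw [hskew] at h
    nlinarith
  -- signed equalities
  have sB : ‖C - A‖ * (inner ℝ (B' - A) (Jv (B - A)) : ℝ)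
      = ‖B - A‖ * (inner ℝ (B' - A) (Jv (C - A)) : ℝ) :=
    signed_eq hnu hnv dB1 dB2 sB1 sB2
  have sC : ‖C - A‖ * (inner ℝ (C' - A) (Jv (B - A)) : ℝ)
      = ‖B - A‖ * (inner ℝ (C' - A) (Jv (C - A)) : ℝ) :=
    signed_eq hnu hnv dC1 dC2 sC1 sC2
  have sA : ‖C - A‖ * (inner ℝ (A' - A) (Jv (B - A)) : ℝ)
      = ‖B - A‖ * (-(inner ℝ (A' - A) (Jv (C - A)) : ℝ)) :=
    signed_eq hnu hnv dA1 (by rw [abs_neg]; exact dA2) sA1 sA2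
  -- external bisector direction at A
  have hinner_w : ∀ X : V2, (inner ℝ X (‖C - A‖ • Jv (B - A) - ‖B - A‖ • Jv (C - A)) : ℝ)
      = ‖C - A‖ * inner ℝ X (Jv (B - A)) - ‖B - A‖ * inner ℝ X (Jv (C - A)) := by
    intro X
    rw [inner_sub_right, real_inner_smul_right, real_inner_smul_right]
  have hwB' : (inner ℝ (B' - A) (‖C - A‖ • Jv (B - A) - ‖B - A‖ • Jv (C - A)) : ℝ) = 0 := by
    rw [hinner_w]; linarith
  have hwC' : (inner ℝ (C' - A) (‖C - A‖ • Jv (B - A) - ‖B - A‖ • Jv (C - A)) : ℝ) = 0 := by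
    rw [hinner_w]; linarith
  have huw : (inner ℝ (B - A) (‖C - A‖ • Jv (B - A) - ‖B - A‖ • Jv (C - A)) : ℝ)
      = ‖B - A‖ * (inner ℝ (C - A) (Jv (B - A)) : ℝ) := by
    rw [hinner_w, inner_Jv_self, hskew]; ring
  have hwne : (‖C - A‖ • Jv (B - A) - ‖B - A‖ • Jv (C - A) : V2) ≠ 0 := by
    intro h0
    rw [h0, inner_zero_right] at huw
    rcases mul_eq_zero.mp huw.symm with h | h
    · exact hnu.ne' h
    · exact hcr h
  obtain ⟨t1, ht1⟩ := perp_span _ (B' - A) hwne hwB'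
  obtain ⟨t2, ht2⟩ := perp_span _ (C' - A) hwne hwC'
  have hkne : Jv (‖C - A‖ • Jv (B - A) - ‖B - A‖ • Jv (C - A)) ≠ 0 :=
    fun h => hwne ((Jv_eq_zero_iff _).mp h)
  -- internal bisector direction at A
  have hpw : (inner ℝ (‖C - A‖ • Jv (B - A) + ‖B - A‖ • Jv (C - A))
      (‖C - A‖ • Jv (B - A) - ‖B - A‖ • Jv (C - A)) : ℝ) = 0 := by
    rw [inner_add_left, hinner_w, hinner_w, real_inner_smul_left, real_inner_smul_left,
      real_inner_smul_left, real_inner_smul_left,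
      real_inner_self_eq_norm_sq, real_inner_self_eq_norm_sq,
      norm_Jv, norm_Jv, real_inner_comm (Jv (B - A)) (Jv (C - A))]
    ring
  have hA'p : (inner ℝ (A' - A) (‖C - A‖ • Jv (B - A) + ‖B - A‖ • Jv (C - A)) : ℝ) = 0 := by
    rw [inner_add_right, real_inner_smul_right, real_inner_smul_right]
    linarith
  obtain ⟨tp, htp⟩ := perp_span _ _ hwne hpw
  have htpne : tp ≠ 0 := by
    intro h0
    rw [h0, zero_smul] at htp
    have hvp : (inner ℝ (C - A) (‖C - A‖ • Jv (B - A) + ‖B - A‖ • Jv (C - A)) : ℝ)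
        = ‖C - A‖ * (inner ℝ (C - A) (Jv (B - A)) : ℝ) := by
      rw [inner_add_right, real_inner_smul_right, real_inner_smul_right, inner_Jv_self]
      ring
    rw [htp, inner_zero_right] at hvp
    rcases mul_eq_zero.mp hvp.symm with h | h
    · exact hnv.ne' h
    · exact hcr h
  have hA'k : (inner ℝ (A' - A)
      (Jv (‖C - A‖ • Jv (B - A) - ‖B - A‖ • Jv (C - A))) : ℝ) = 0 := by
    have h1 : (inner ℝ (A' - A) (‖C - A‖ • Jv (B - A) + ‖B - A‖ • Jv (C - A)) : ℝ)
        = tp * inner ℝ (A' - A) (Jv (‖C - A‖ • Jv (B - A) - ‖B - A‖ • Jv (C - A))) := by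
      rw [htp, real_inner_smul_right]
    rw [hA'p] at h1
    rcases mul_eq_zero.mp h1.symm with h | h
    · exact absurd h htpne
    · exact h
  have ht12 : t1 ≠ t2 := by
    intro h0
    have hBC' : B' - A = C' - A := by rw [ht1, ht2, h0]
    have : B' = C' := by
      have := congrArg (· + A) hBC'
      simpa [sub_add_cancel] using this
    rw [this] at sB1
    nlinarith
  refine ⟨⟨_, t1, t2, hkne, ht1, ht2, ht12⟩, ?_⟩
  have hBC : B' - C' = (t1 - t2) • Jv (‖C - A‖ • Jv (B - A) - ‖B - A‖ • Jv (C - A)) := by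
    rw [sub_smul, ← ht1, ← ht2]
    abel
  rw [hBC, real_inner_smul_right, hA'k, mul_zero]


lemma footOnNine (a b c : V2) (R' t : ℝ) (ha : ‖a‖ = R') (hb : ‖b‖ = R') (hc : ‖c‖ = R')
    (hperp : (inner ℝ (a - (b + t • (c - b))) (b - c) : ℝ) = 0) :
    ‖(2⁻¹:ℝ) • (a + b + c) - (b + t • (c - b))‖ = R' / 2 := by
  have hR : 0 ≤ R' := ha ▸ norm_nonneg a
  have haa : (inner ℝ a a : ℝ) = R' ^ 2 := by rw [real_inner_self_eq_norm_sq, ha]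
  have hbb : (inner ℝ b b : ℝ) = R' ^ 2 := by rw [real_inner_self_eq_norm_sq, hb]
  have hcc : (inner ℝ c c : ℝ) = R' ^ 2 := by rw [real_inner_self_eq_norm_sq, hc]
  have hsq : ‖(2⁻¹:ℝ) • (a + b + c) - (b + t • (c - b))‖ ^ 2 = (R' / 2) ^ 2 := by
    rw [← real_inner_self_eq_norm_sq]
    simp only [inner_sub_left, inner_sub_right, inner_add_left, inner_add_right,
      real_inner_smul_left, real_inner_smul_right] at hperp ⊢
    rw [real_inner_comm b a, real_inner_comm c a, real_inner_comm c b] at hperp ⊢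
    linear_combination (t - 2⁻¹) * hperp + 4⁻¹ * haa + (t/2 - 4⁻¹) * hbb + (4⁻¹ - t/2) * hcc
  nlinarith [norm_nonneg ((2⁻¹:ℝ) • (a + b + c) - (b + t • (c - b)))]

set_option maxHeartbeats 2000000 in
/-- The circumcircle of `ABC` is the nine-point circle of the excentral triangle `A'B'C'`:
it passes through the midpoints of the sides of `A'B'C'` (and `A, B, C` are the feet of the
altitudes of `A'B'C'`). -/
theorem stmt_15 (A B C A' B' C' o : EuclideanSpace ℝ (Fin 2))
    (hABC : AffineIndependent ℝ ![A, B, C]) (R : ℝ)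
    (ho1 : dist o A = R) (ho2 : dist o B = R) (ho3 : dist o C = R)
    (hA' : IsExcenterOpp A B C A') (hB' : IsExcenterOpp B C A B')
    (hC' : IsExcenterOpp C A B C') :
    dist o (midpoint ℝ B' C') = R ∧ dist o (midpoint ℝ C' A') = R ∧
    dist o (midpoint ℝ A' B') = R := by
  have hcrA : (inner ℝ (C - A) (Jv (B - A)) : ℝ) ≠ 0 := cross_ne_of_affineIndependent hABC
  have hcrB : (inner ℝ (A - B) (Jv (C - B)) : ℝ) ≠ 0 := cr_cycle A B C ▸ hcrA
  have hcrC : (inner ℝ (B - C) (Jv (A - C)) : ℝ) ≠ 0 := cr_cycle B C A ▸ hcrB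
  obtain ⟨⟨ka, a1, a2, hka, hta1, hta2, hane⟩, hperpA⟩ := vertex A B C A' B' C' hcrA hA' hB' hC'
  obtain ⟨⟨kb, b1, b2, hkb, htb1, htb2, hbne⟩, hperpB⟩ := vertex B C A B' C' A' hcrB hB' hC' hA'
  obtain ⟨⟨kc, c1, c2, hkc, htc1, htc2, hcne⟩, hperpC⟩ := vertex C A B C' A' B' hcrC hC' hA' hB'
  -- foot representations
  have repA : A = B' + (a1 / (a1 - a2)) • (C' - B') := by
    have hsub : a1 - a2 ≠ 0 := sub_ne_zero.mpr hane
    have hd : C' - B' = (a2 - a1) • ka := by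
      have : C' - B' = (C' - A) - (B' - A) := by abel
      rw [this, hta1, hta2, ← sub_smul]
    have h1 : (a1 / (a1 - a2)) • (C' - B') = (-a1) • ka := by
      rw [hd, smul_smul]
      congr 1
      field_simp
      ring
    rw [h1, neg_smul, ← hta1]
    abel
  have repB : B = C' + (b1 / (b1 - b2)) • (A' - C') := by
    have hsub : b1 - b2 ≠ 0 := sub_ne_zero.mpr hbne
    have hd : A' - C' = (b2 - b1) • kb := by
      have : A' - C' = (A' - B) - (C' - B) := by abel
      rw [this, htb1, htb2, ← sub_smul]
    have h1 : (b1 / (b1 - b2)) • (A' - C') = (-b1) • kb := by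
      rw [hd, smul_smul]
      congr 1
      field_simp
      ring
    rw [h1, neg_smul, ← htb1]
    abel
  have repC : C = A' + (c1 / (c1 - c2)) • (B' - A') := by
    have hsub : c1 - c2 ≠ 0 := sub_ne_zero.mpr hcne
    have hd : B' - A' = (c2 - c1) • kc := by
      have : B' - A' = (B' - C) - (A' - C) := by abel
      rw [this, htc1, htc2, ← sub_smul]
    have h1 : (c1 / (c1 - c2)) • (B' - A') = (-c1) • kc := by
      rw [hd, smul_smul]
      congr 1
      field_simp
      ring
    rw [h1, neg_smul, ← htc1]
    abel
  -- A', B', C' are affinely independent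
  have hind : AffineIndependent ℝ ![A', B', C'] := by
    rw [affineIndependent_iff_not_collinear, range_triple]
    intro hcol
    have hncol := affineIndependent_iff_not_collinear.mp hABC
    rw [range_triple] at hncol
    apply hncol
    obtain ⟨d, hd⟩ := (collinear_iff_of_mem (Set.mem_insert A' _)).mp hcol
    obtain ⟨rB, hrB⟩ := hd B' (Set.mem_insert_of_mem _ (Set.mem_insert _ _))
    obtain ⟨rC, hrC⟩ := hd C' (Set.mem_insert_of_mem _ (Set.mem_insert_of_mem _ rfl))
    rw [collinear_iff_exists_forall_eq_smul_vadd]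
    refine ⟨A', d, ?_⟩
    intro p hp
    simp only [vadd_eq_add] at hrB hrC
    rcases hp with rfl | rfl | rfl
    · exact ⟨rB + (a1 / (a1 - a2)) * (rC - rB), by
        rw [repA, hrB, hrC, vadd_eq_add]; module⟩
    · exact ⟨rC - (b1 / (b1 - b2)) * rC, by
        rw [repB, hrC, vadd_eq_add]; module⟩
    · exact ⟨(c1 / (c1 - c2)) * rB, by
        rw [repC, hrB, vadd_eq_add]; module⟩
  -- the circumcircle of the excentral triangle
  set T : Affine.Simplex ℝ V2 2 := ⟨![A', B', C'], hind⟩ with hT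
  set o' : V2 := T.circumcenter with ho'
  set R' : ℝ := T.circumradius with hR'
  have hdA' : ‖A' - o'‖ = R' := by
    rw [← dist_eq_norm]; exact T.dist_circumcenter_eq_circumradius 0
  have hdB' : ‖B' - o'‖ = R' := by
    rw [← dist_eq_norm]; exact T.dist_circumcenter_eq_circumradius 1
  have hdC' : ‖C' - o'‖ = R' := by
    rw [← dist_eq_norm]; exact T.dist_circumcenter_eq_circumradius 2
  -- the nine-point center
  set N : V2 := o' + (2⁻¹:ℝ) • ((A' - o') + (B' - o') + (C' - o')) with hN
  -- distances from N to the vertices A, B, C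
  have hNA : dist N A = R' / 2 := by
    rw [dist_eq_norm]
    have hperp' : (inner ℝ ((A' - o') - ((B' - o') + (a1 / (a1 - a2)) • ((C' - o') - (B' - o'))))
        ((B' - o') - (C' - o')) : ℝ) = 0 := by
      have e1 : (A' - o') - ((B' - o') + (a1 / (a1 - a2)) • ((C' - o') - (B' - o'))) = A' - A := by
        rw [show (A:V2) = B' + (a1 / (a1 - a2)) • (C' - B') from repA]; module
      have e2 : (B' - o') - (C' - o') = B' - C' := by abel
      rw [e1, e2]; exact hperpA
    have := footOnNine (A' - o') (B' - o') (C' - o') R' (a1 / (a1 - a2)) hdA' hdB' hdC' hperp'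
    have eN : N - A = (2⁻¹:ℝ) • ((A' - o') + (B' - o') + (C' - o'))
        - ((B' - o') + (a1 / (a1 - a2)) • ((C' - o') - (B' - o'))) := by
      rw [hN, show (A:V2) = B' + (a1 / (a1 - a2)) • (C' - B') from repA]; module
    rw [eN]
    exact this
  have hNB : dist N B = R' / 2 := by
    rw [dist_eq_norm]
    have hperp' : (inner ℝ ((B' - o') - ((C' - o') + (b1 / (b1 - b2)) • ((A' - o') - (C' - o'))))
        ((C' - o') - (A' - o')) : ℝ) = 0 := by
      have e1 : (B' - o') - ((C' - o') + (b1 / (b1 - b2)) • ((A' - o') - (C' - o'))) = B' - B := by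
        rw [show (B:V2) = C' + (b1 / (b1 - b2)) • (A' - C') from repB]; module
      have e2 : (C' - o') - (A' - o') = C' - A' := by abel
      rw [e1, e2]; exact hperpB
    have := footOnNine (B' - o') (C' - o') (A' - o') R' (b1 / (b1 - b2)) hdB' hdC' hdA' hperp'
    have eN : N - B = (2⁻¹:ℝ) • ((B' - o') + (C' - o') + (A' - o'))
        - ((C' - o') + (b1 / (b1 - b2)) • ((A' - o') - (C' - o'))) := by
      rw [hN, show (B:V2) = C' + (b1 / (b1 - b2)) • (A' - C') from repB]; module
    rw [eN]
    exact this
  have hNC : dist N C = R' / 2 := by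
    rw [dist_eq_norm]
    have hperp' : (inner ℝ ((C' - o') - ((A' - o') + (c1 / (c1 - c2)) • ((B' - o') - (A' - o'))))
        ((A' - o') - (B' - o')) : ℝ) = 0 := by
      have e1 : (C' - o') - ((A' - o') + (c1 / (c1 - c2)) • ((B' - o') - (A' - o'))) = C' - C := by
        rw [show (C:V2) = A' + (c1 / (c1 - c2)) • (B' - A') from repC]; module
      have e2 : (A' - o') - (B' - o') = A' - B' := by abel
      rw [e1, e2]; exact hperpC
    have := footOnNine (C' - o') (A' - o') (B' - o') R' (c1 / (c1 - c2)) hdC' hdA' hdB' hperp'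
    have eN : N - C = (2⁻¹:ℝ) • ((C' - o') + (A' - o') + (B' - o'))
        - ((A' - o') + (c1 / (c1 - c2)) • ((B' - o') - (A' - o'))) := by
      rw [hN, show (C:V2) = A' + (c1 / (c1 - c2)) • (B' - A') from repC]; module
    rw [eN]
    exact this
  -- uniqueness of the circumcenter of ABC
  set S : Affine.Simplex ℝ V2 2 := ⟨![A, B, C], hABC⟩ with hS
  have hspan : affineSpan ℝ (Set.range S.points) = ⊤ := by
    rw [hABC.affineSpan_eq_top_iff_card_eq_finrank_add_one]
    simp [finrank_euclideanSpace_fin]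
  have ho_eq : o = S.circumcenter := by
    apply S.eq_circumcenter_of_dist_eq (r := R)
    · rw [hspan]; exact AffineSubspace.mem_top ℝ V2 o
    · intro i
      fin_cases i
      · show dist A o = R
        rw [dist_comm]; exact ho1
      · show dist B o = R
        rw [dist_comm]; exact ho2
      · show dist C o = R
        rw [dist_comm]; exact ho3
  have hN_eq : N = S.circumcenter := by
    apply S.eq_circumcenter_of_dist_eq (r := R' / 2)
    · rw [hspan]; exact AffineSubspace.mem_top ℝ V2 N
    · intro i
      fin_cases i
      · show dist A N = R' / 2
        rw [dist_comm]; exact hNA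
      · show dist B N = R' / 2
        rw [dist_comm]; exact hNB
      · show dist C N = R' / 2
        rw [dist_comm]; exact hNC
  have hoN : o = N := ho_eq.trans hN_eq.symm
  have hRR : R = R' / 2 := by rw [← ho1, hoN]; exact hNA
  -- distances from N to the midpoints
  have hm : ∀ X Y Z : V2, ‖X - o'‖ = R' →
      N - midpoint ℝ Y Z = (2⁻¹:ℝ) • (X - o') →
      dist N (midpoint ℝ Y Z) = R' / 2 := by
    intro X Y Z hX hmid
    rw [dist_eq_norm, hmid, norm_smul, Real.norm_eq_abs, hX]
    rw [abs_of_nonneg (by norm_num : (0:ℝ) ≤ (2:ℝ)⁻¹)]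
    ring
  have hmidpt : ∀ Y Z : V2, midpoint ℝ Y Z = (2⁻¹:ℝ) • (Y + Z) := by
    intro Y Z
    rw [midpoint_eq_smul_add, invOf_eq_inv]
  refine ⟨?_, ?_, ?_⟩
  · rw [hoN, hRR]
    exact hm A' B' C' hdA' (by rw [hN, hmidpt]; module)
  · rw [hoN, hRR]
    exact hm B' C' A' hdB' (by rw [hN, hmidpt]; module)
  · rw [hoN, hRR]
    exact hm C' A' B' hdC' (by rw [hN, hmidpt]; module)
end

section
/- Let P have barycentric coordinates (x, y, z) with respect to triangle ABC, let E = BP ∩ CA and F = CP ∩ AB, and let Q be the point with barycentric coordinates (x(y+z), y(z+x), z(x+y)). Then the line AQ passes through the midpoint of segment EF. -/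
/-- Let `P = (x:y:z)` in barycentric coordinates with respect to triangle `ABC`, with traces
`E = BP ∩ CA = (x:0:z)` and `F = CP ∩ AB = (x:y:0)`, and let `Q = (x(y+z) : y(z+x) : z(x+y))`.
Then the line `AQ` passes through the midpoint of segment `EF`. -/
theorem stmt_18 {k : Type*} [Field k] [Invertible (2 : k)]
    {V : Type*} [AddCommGroup V] [Module k V]
    (A B C E F Q : V) (hABC : AffineIndependent k ![A, B, C])
    (x y z : k) (hx : x ≠ 0) (hy : y ≠ 0) (hz : z ≠ 0)
    (hxy : x + y ≠ 0) (hyz : y + z ≠ 0) (hzx : z + x ≠ 0)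
    (hs : x * (y + z) + y * (z + x) + z * (x + y) ≠ 0)
    (hE : E = (x / (x + z)) • A + (z / (x + z)) • C)
    (hF : F = (x / (x + y)) • A + (y / (x + y)) • B)
    (hQ : Q = (x * (y + z) / (x * (y + z) + y * (z + x) + z * (x + y))) • A
            + (y * (z + x) / (x * (y + z) + y * (z + x) + z * (x + y))) • B
            + (z * (x + y) / (x * (y + z) + y * (z + x) + z * (x + y))) • C) :
    midpoint k E F ∈ affineSpan k {A, Q} := by
  have hxz : x + z ≠ 0 := by rwa [add_comm]
  have h2 : (2 : k) ≠ 0 := Invertible.ne_zero 2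
  have ht : midpoint k E F
      = AffineMap.lineMap A Q ((x*(y+z)+y*(z+x)+z*(x+y))/(2*(x+y)*(z+x))) := by
    rw [midpoint_eq_smul_add, invOf_eq_inv, hE, hF, hQ, AffineMap.lineMap_apply]
    simp only [vsub_eq_sub, vadd_eq_add]
    match_scalars <;> field_simp [show x * (y + z) + y * (z + x) + (x + y) * z ≠ 0 by rw [mul_comm (x + y) z]; exact hs] <;> ring
  rw [ht]
  exact AffineMap.lineMap_mem_affineSpan_pair _ _ _
end

section
/- The Feuerbach point of a non-equilateral triangle ABC has homogeneous barycentric coordinates ((b−c)²(b+c−a), (a−c)²(a+c−b), (a−b)²(a+b−c)); in particular, the nine-point circle and the incircle of ABC are internally tangent at this point (Feuerbach's theorem). -/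
set_option linter.all false

open scoped RealInnerProductSpace

private lemma inner_diff {V : Type*} [NormedAddCommGroup V] [InnerProductSpace ℝ V]
    (X Y A B : V) :
    2 * ⟪X - Y, B - A⟫ = (dist X A ^ 2 - dist X B ^ 2) - (dist Y A ^ 2 - dist Y B ^ 2) := by
  simp only [dist_eq_norm, ← real_inner_self_eq_norm_sq, inner_sub_left, inner_sub_right]
  rw [real_inner_comm A X, real_inner_comm B X, real_inner_comm A Y, real_inner_comm B Y]
  ring

private lemma bary_dist {V : Type*} [NormedAddCommGroup V] [InnerProductSpace ℝ V]
    (X P1 P2 P3 : V) (α β γ : ℝ) (hsum : α + β + γ = 1) :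
    dist X (α • P1 + β • P2 + γ • P3) ^ 2
      = α * dist X P1 ^ 2 + β * dist X P2 ^ 2 + γ * dist X P3 ^ 2
        - (β * γ * dist P2 P3 ^ 2 + γ * α * dist P3 P1 ^ 2 + α * β * dist P1 P2 ^ 2) := by
  have hγ : γ = 1 - α - β := by linarith
  subst hγ
  have h : X - (α • P1 + β • P2 + (1 - α - β) • P3)
      = α • (X - P1) + β • (X - P2) + (1 - α - β) • (X - P3) := by module
  simp only [dist_eq_norm, h, ← real_inner_self_eq_norm_sq, inner_add_left, inner_add_right,
    inner_sub_left, inner_sub_right, real_inner_smul_left, real_inner_smul_right]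
  rw [real_inner_comm P1 X, real_inner_comm P2 X, real_inner_comm P3 X,
    real_inner_comm P2 P1, real_inner_comm P3 P1, real_inner_comm P3 P2]
  ring

private lemma span_two {v A B C : EuclideanSpace ℝ (Fin 2)}
    (hABC : AffineIndependent ℝ ![A, B, C])
    (h1 : ⟪v, B - A⟫ = 0) (h2 : ⟪v, C - A⟫ = 0) : v = 0 := by
  have hli : LinearIndependent ℝ ![B - A, C - A] := by
    rw [affineIndependent_iff_linearIndependent_vsub ℝ ![A, B, C] 0] at hABC
    have hinj : Function.Injective
        (fun j : Fin 2 => (⟨j.succ, Fin.succ_ne_zero j⟩ : {x : Fin 3 // x ≠ 0})) := by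
      intro i j hij
      simpa [Fin.succ_inj] using Subtype.mk_eq_mk.mp hij
    have := hABC.comp _ hinj
    convert this using 1
    funext j
    fin_cases j <;> simp [Matrix.cons_val_one, Matrix.head_cons]
    rfl
  have hsp : Submodule.span ℝ (Set.range ![B - A, C - A]) = ⊤ :=
    hli.span_eq_top_of_card_eq_finrank (by simp)
  have hv : v ∈ Submodule.span ℝ (Set.range ![B - A, C - A]) := hsp ▸ Submodule.mem_top
  rw [Matrix.range_cons, Matrix.range_cons, Matrix.range_empty, Set.union_empty,
    Set.singleton_union] at hv
  rw [Submodule.mem_span_insert] at hv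
  obtain ⟨x, z, hz, rfl⟩ := hv
  rw [Submodule.mem_span_singleton] at hz
  obtain ⟨y, rfl⟩ := hz
  have : ⟪x • (B - A) + y • (C - A), x • (B - A) + y • (C - A)⟫ = 0 := by
    rw [inner_add_right, real_inner_smul_right, real_inner_smul_right, h1, h2]
    ring
  exact inner_self_eq_zero.mp this

private lemma side_tangent {V : Type*} [NormedAddCommGroup V] [InnerProductSpace ℝ V]
    {Q P1 P2 T : V} {r : ℝ}
    (hT : T ∈ segment ℝ P1 P2) (hQT : dist Q T = r) (hperp : ⟪Q - T, P2 - P1⟫ = 0) :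
    dist P1 T + dist T P2 = dist P1 P2 ∧ dist Q P1 ^ 2 = r ^ 2 + dist P1 T ^ 2
      ∧ dist Q P2 ^ 2 = r ^ 2 + dist T P2 ^ 2 := by
  obtain ⟨u, v, hu, hv, huv, hTe⟩ := hT
  obtain rfl : u = 1 - v := by linarith
  have h1 : T - P1 = v • (P2 - P1) := by rw [← hTe]; module
  have h2 : P2 - T = (1 - v) • (P2 - P1) := by rw [← hTe]; module
  have hd1 : dist P1 T = v * dist P1 P2 := by
    rw [dist_eq_norm, ← norm_neg, neg_sub, h1, norm_smul, Real.norm_eq_abs, abs_of_nonneg hv,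
      ← dist_eq_norm, dist_comm P1 P2]
  have hd2 : dist T P2 = (1 - v) * dist P1 P2 := by
    rw [dist_comm, dist_eq_norm, h2, norm_smul, Real.norm_eq_abs,
      abs_of_nonneg (by linarith : (0:ℝ) ≤ 1 - v), ← dist_eq_norm, dist_comm P1 P2]
  refine ⟨by rw [hd1, hd2]; ring, ?_, ?_⟩
  · have hQ1 : Q - P1 = (Q - T) + (T - P1) := by abel
    have hperp1 : ⟪Q - T, T - P1⟫ = 0 := by
      rw [h1, real_inner_smul_right, hperp, mul_zero]
    have hpy := norm_add_sq_real (Q - T) (T - P1)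
    rw [hperp1] at hpy
    rw [dist_eq_norm, hQ1, hpy, ← dist_eq_norm, ← dist_eq_norm, hQT, dist_comm P1 T]
    ring
  · have hQ2 : Q - P2 = (Q - T) + (T - P2) := by abel
    have hperp2 : ⟪Q - T, T - P2⟫ = 0 := by
      have h3 : T - P2 = -((1 - v) • (P2 - P1)) := by rw [← h2]; abel
      rw [h3, inner_neg_right, real_inner_smul_right, hperp]; ring
    have hpy := norm_add_sq_real (Q - T) (T - P2)
    rw [hperp2] at hpy
    rw [dist_eq_norm, hQ2, hpy, ← dist_eq_norm, ← dist_eq_norm, hQT]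
    ring

private lemma sq_cancel {x y : ℝ} (hx : 0 ≤ x) (hy : 0 ≤ y) (h : x ^ 2 = y ^ 2) : x = y := by
  have h2 : (x - y) * (x + y) = 0 := by ring_nf; linarith
  rcases mul_eq_zero.mp h2 with h3 | h3
  · linarith
  · linarith

private lemma le_of_sq_le {x y : ℝ} (hx : 0 < x) (hy : 0 < y) (h : x ^ 2 ≤ y ^ 2) : x ≤ y := by
  nlinarith

private lemma euler_key {a b c : ℝ} (hta : 0 < b + c - a) (htb : 0 < a + c - b)
    (htc : 0 < a + b - c) :
    ((b + c - a) * (a + c - b) * (a + b - c)) ^ 2 ≤ (a * b * c) ^ 2 := by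
  have k1 : (b + c - a) * (a + c - b) ≤ c ^ 2 := by linarith [sq_nonneg (a - b)]
  have k2 : (a + c - b) * (a + b - c) ≤ a ^ 2 := by linarith [sq_nonneg (b - c)]
  have k3 : (a + b - c) * (b + c - a) ≤ b ^ 2 := by linarith [sq_nonneg (a - c)]
  have k12 : ((b + c - a) * (a + c - b)) * ((a + c - b) * (a + b - c)) ≤ c ^ 2 * a ^ 2 :=
    mul_le_mul k1 k2 (by positivity) (by positivity)
  have k123 : (((b + c - a) * (a + c - b)) * ((a + c - b) * (a + b - c))) *
      ((a + b - c) * (b + c - a)) ≤ (c ^ 2 * a ^ 2) * b ^ 2 :=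
    mul_le_mul k12 k3 (by positivity) (by positivity)
  linarith [k123]

set_option maxHeartbeats 8000000 in
/-- Feuerbach's theorem with the barycentric coordinates of the Feuerbach point:
for a non-equilateral triangle `ABC` the point
`Z = ((b−c)²(b+c−a) : (a−c)²(a+c−b) : (a−b)²(a+b−c))`
lies on both the nine-point circle and the incircle, and the two circles are internally
tangent (the distance between their centers is `ρ − r`), hence tangent at `Z`. -/
theorem stmt_19 (A B C n Q D E F : EuclideanSpace ℝ (Fin 2))
    (hABC : AffineIndependent ℝ ![A, B, C])
    (hnoneq : ¬(dist A B = dist B C ∧ dist B C = dist C A))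
    (ρ r : ℝ) (hρ : 0 < ρ) (hr : 0 < r)
    -- nine-point circle: center `n`, radius `ρ`, through the three side midpoints
    (hn1 : dist n (midpoint ℝ B C) = ρ) (hn2 : dist n (midpoint ℝ C A) = ρ)
    (hn3 : dist n (midpoint ℝ A B) = ρ)
    -- incircle: center `Q`, radius `r`, tangency points `D, E, F` on the sides
    (hD : D ∈ segment ℝ B C) (hQD : dist Q D = r) (hDperp : ⟪Q - D, C - B⟫ = 0)
    (hE : E ∈ segment ℝ C A) (hQE : dist Q E = r) (hEperp : ⟪Q - E, A - C⟫ = 0)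
    (hF : F ∈ segment ℝ A B) (hQF : dist Q F = r) (hFperp : ⟪Q - F, B - A⟫ = 0)
    (a b c : ℝ) (ha : a = dist B C) (hb : b = dist C A) (hc : c = dist A B)
    (ξ η ζ s : ℝ)
    (hξ : ξ = (b - c) ^ 2 * (b + c - a)) (hη : η = (a - c) ^ 2 * (a + c - b))
    (hζ : ζ = (a - b) ^ 2 * (a + b - c)) (hs : s = ξ + η + ζ)
    (Z : EuclideanSpace ℝ (Fin 2))
    (hZ : Z = (ξ / s) • A + (η / s) • B + (ζ / s) • C) :
    dist n Z = ρ ∧ dist Q Z = r ∧ dist n Q = ρ - r := by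
  -- distances between the vertices
  have dBC : dist B C = a := ha.symm
  have dCA : dist C A = b := hb.symm
  have dAB : dist A B = c := hc.symm
  have dCB : dist C B = a := by rw [dist_comm]; exact dBC
  have dAC : dist A C = b := by rw [dist_comm]; exact dCA
  have dBA : dist B A = c := by rw [dist_comm]; exact dAB
  -- nondegeneracy
  have hnc : ¬Collinear ℝ ({A, B, C} : Set (EuclideanSpace ℝ (Fin 2))) :=
    affineIndependent_iff_not_collinear_set.mp hABC
  have hta : 0 < b + c - a := by
    by_contra hcon
    push_neg at hcon
    have h1 : dist B A + dist A C ≤ dist B C := by rw [dBA, dAC, dBC]; linarith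
    have heq : dist B A + dist A C = dist B C := le_antisymm h1 (dist_triangle B A C)
    have hw := (dist_add_dist_eq_iff.mp heq).collinear
    rw [Set.insert_comm] at hw
    exact hnc hw
  have htb : 0 < a + c - b := by
    by_contra hcon
    push_neg at hcon
    have h1 : dist A B + dist B C ≤ dist A C := by rw [dAB, dBC, dAC]; linarith
    have heq : dist A B + dist B C = dist A C := le_antisymm h1 (dist_triangle A B C)
    have hw := (dist_add_dist_eq_iff.mp heq).collinear
    exact hnc hw
  have htc : 0 < a + b - c := by
    by_contra hcon
    push_neg at hcon
    have h1 : dist A C + dist C B ≤ dist A B := by rw [dAC, dCB, dAB]; linarith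
    have heq : dist A C + dist C B = dist A B := le_antisymm h1 (dist_triangle A C B)
    have hw := (dist_add_dist_eq_iff.mp heq).collinear
    rw [Set.insert_comm A C ({B} : Set (EuclideanSpace ℝ (Fin 2)))] at hw
    have hw2 : ({C, A, B} : Set (EuclideanSpace ℝ (Fin 2))) = {A, B, C} := by
      ext x; simp; tauto
    exact hnc (hw2 ▸ hw)
  have hapos : 0 < a := by linarith
  have hbpos : 0 < b := by linarith
  have hcpos : 0 < c := by linarith
  have hσ : 0 < a + b + c := by linarith
  -- distances from n to the vertices
  have hmBC : midpoint ℝ B C = (0:ℝ) • A + (2⁻¹:ℝ) • B + (2⁻¹:ℝ) • C := by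
    rw [midpoint_eq_smul_add, invOf_eq_inv]; module
  have hmCA : midpoint ℝ C A = (2⁻¹:ℝ) • A + (0:ℝ) • B + (2⁻¹:ℝ) • C := by
    rw [midpoint_eq_smul_add, invOf_eq_inv]; module
  have hmAB : midpoint ℝ A B = (2⁻¹:ℝ) • A + (2⁻¹:ℝ) • B + (0:ℝ) • C := by
    rw [midpoint_eq_smul_add, invOf_eq_inv]; module
  have e1 : ρ ^ 2 = 2⁻¹ * dist n B ^ 2 + 2⁻¹ * dist n C ^ 2 - 4⁻¹ * a ^ 2 := by
    have h := bary_dist n A B C 0 2⁻¹ 2⁻¹ (by norm_num)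
    rw [← hmBC, hn1, dBC] at h
    rw [h]; ring
  have e2 : ρ ^ 2 = 2⁻¹ * dist n A ^ 2 + 2⁻¹ * dist n C ^ 2 - 4⁻¹ * b ^ 2 := by
    have h := bary_dist n A B C 2⁻¹ 0 2⁻¹ (by norm_num)
    rw [← hmCA, hn2, dCA] at h
    rw [h]; ring
  have e3 : ρ ^ 2 = 2⁻¹ * dist n A ^ 2 + 2⁻¹ * dist n B ^ 2 - 4⁻¹ * c ^ 2 := by
    have h := bary_dist n A B C 2⁻¹ 2⁻¹ 0 (by norm_num)
    rw [← hmAB, hn3, dAB] at h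
    rw [h]; ring
  have hnA : dist n A ^ 2 = ρ ^ 2 + (b ^ 2 + c ^ 2 - a ^ 2) / 4 := by linarith
  have hnB : dist n B ^ 2 = ρ ^ 2 + (c ^ 2 + a ^ 2 - b ^ 2) / 4 := by linarith
  have hnC : dist n C ^ 2 = ρ ^ 2 + (a ^ 2 + b ^ 2 - c ^ 2) / 4 := by linarith
  -- tangent lengths from the vertices
  obtain ⟨sD, pyDB, pyDC⟩ := side_tangent hD hQD hDperp
  obtain ⟨sE, pyEC, pyEA⟩ := side_tangent hE hQE hEperp
  obtain ⟨sF, pyFA, pyFB⟩ := side_tangent hF hQF hFperp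
  rw [dBC] at sD
  rw [dCA] at sE
  rw [dAB] at sF
  have tB : dist F B = dist B D := sq_cancel dist_nonneg dist_nonneg (by linarith)
  have tC : dist D C = dist C E := sq_cancel dist_nonneg dist_nonneg (by linarith)
  have tA : dist E A = dist A F := sq_cancel dist_nonneg dist_nonneg (by linarith)
  have hAF : dist A F = (b + c - a) / 2 := by linarith
  have hBD : dist B D = (a + c - b) / 2 := by linarith
  have hCE : dist C E = (a + b - c) / 2 := by linarith
  have hQA : dist Q A ^ 2 = r ^ 2 + ((b + c - a) / 2) ^ 2 := by
    rw [← hAF, ← tA]; linarith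
  have hQB : dist Q B ^ 2 = r ^ 2 + ((a + c - b) / 2) ^ 2 := by
    rw [← hBD, ← tB]; linarith
  have hQC : dist Q C ^ 2 = r ^ 2 + ((a + b - c) / 2) ^ 2 := by
    rw [← hCE, ← tC]; linarith
  -- the incenter
  have hσ0 : (a + b + c) ≠ 0 := ne_of_gt hσ
  obtain ⟨I, hI⟩ : ∃ P : EuclideanSpace ℝ (Fin 2),
      P = (a / (a + b + c)) • A + (b / (a + b + c)) • B + (c / (a + b + c)) • C := ⟨_, rfl⟩
  have hsumI : a / (a + b + c) + b / (a + b + c) + c / (a + b + c) = 1 := by field_simp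
  have hIA : dist A I ^ 2 = b * c * (b + c - a) / (a + b + c) := by
    have h := bary_dist A A B C _ _ _ hsumI
    rw [← hI, dist_self, dAB, dAC, dBC, dCA] at h
    rw [h]; field_simp; ring
  have hIB : dist B I ^ 2 = a * c * (a + c - b) / (a + b + c) := by
    have h := bary_dist B A B C _ _ _ hsumI
    rw [← hI, dist_self, dBA, dBC, dCA, dAB] at h
    rw [h]; field_simp; ring
  have hIC : dist C I ^ 2 = a * b * (a + b - c) / (a + b + c) := by
    have h := bary_dist C A B C _ _ _ hsumI
    rw [← hI, dist_self, dCA, dCB, dBC, dAB] at h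
    rw [h]; field_simp; ring
  have hQI : Q = I := by
    have hp1 : ⟪Q - I, B - A⟫ = 0 := by
      have hd := inner_diff Q I A B
      rw [dist_comm I A, dist_comm I B, hQA, hQB, hIA, hIB] at hd
      have hz : (r ^ 2 + ((b + c - a) / 2) ^ 2 - (r ^ 2 + ((a + c - b) / 2) ^ 2)) -
          (b * c * (b + c - a) / (a + b + c) - a * c * (a + c - b) / (a + b + c)) = 0 := by
        field_simp; ring
      linarith
    have hp2 : ⟪Q - I, C - A⟫ = 0 := by
      have hd := inner_diff Q I A C
      rw [dist_comm I A, dist_comm I C, hQA, hQC, hIA, hIC] at hd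
      have hz : (r ^ 2 + ((b + c - a) / 2) ^ 2 - (r ^ 2 + ((a + b - c) / 2) ^ 2)) -
          (b * c * (b + c - a) / (a + b + c) - a * b * (a + b - c) / (a + b + c)) = 0 := by
        field_simp; ring
      linarith
    have := span_two hABC hp1 hp2
    exact sub_eq_zero.mp this
  have hr2 : r ^ 2 = (b + c - a) * (a + c - b) * (a + b - c) / (4 * (a + b + c)) := by
    have h1 : dist Q A ^ 2 = b * c * (b + c - a) / (a + b + c) := by
      rw [hQI, dist_comm]; exact hIA
    rw [hQA] at h1
    have hz : b * c * (b + c - a) / (a + b + c) - ((b + c - a) / 2) ^ 2 =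
        (b + c - a) * (a + c - b) * (a + b - c) / (4 * (a + b + c)) := by
      field_simp; ring
    linarith
  -- the nine-point center
  obtain ⟨α, hα⟩ : ∃ x : ℝ, x = a ^ 2 * (b ^ 2 + c ^ 2 - a ^ 2) := ⟨_, rfl⟩
  obtain ⟨β, hβ⟩ : ∃ x : ℝ, x = b ^ 2 * (c ^ 2 + a ^ 2 - b ^ 2) := ⟨_, rfl⟩
  obtain ⟨γ, hγ⟩ : ∃ x : ℝ, x = c ^ 2 * (a ^ 2 + b ^ 2 - c ^ 2) := ⟨_, rfl⟩
  obtain ⟨W, hW⟩ : ∃ x : ℝ, x = α + β + γ := ⟨_, rfl⟩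
  have hWval : W = (a + b + c) * (b + c - a) * (a + c - b) * (a + b - c) := by
    rw [hW, hα, hβ, hγ]; ring
  have hWpos : 0 < W := by rw [hWval]; positivity
  have hW0 : W ≠ 0 := ne_of_gt hWpos
  -- midpoints and their mutual distances
  obtain ⟨mA, hmA⟩ : ∃ P : EuclideanSpace ℝ (Fin 2), P = midpoint ℝ B C := ⟨_, rfl⟩
  obtain ⟨mB, hmB⟩ : ∃ P : EuclideanSpace ℝ (Fin 2), P = midpoint ℝ C A := ⟨_, rfl⟩
  obtain ⟨mC, hmC⟩ : ∃ P : EuclideanSpace ℝ (Fin 2), P = midpoint ℝ A B := ⟨_, rfl⟩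
  have dmBmC : dist mB mC = a / 2 := by
    have h : mB - mC = (2⁻¹ : ℝ) • (C - B) := by
      rw [hmB, hmC, midpoint_eq_smul_add, midpoint_eq_smul_add, invOf_eq_inv]; module
    rw [dist_eq_norm, h, norm_smul, Real.norm_eq_abs, ← dist_eq_norm, dCB]
    rw [abs_of_nonneg (by norm_num : (0:ℝ) ≤ 2⁻¹)]; ring
  have dmCmA : dist mC mA = b / 2 := by
    have h : mC - mA = (2⁻¹ : ℝ) • (A - C) := by
      rw [hmC, hmA, midpoint_eq_smul_add, midpoint_eq_smul_add, invOf_eq_inv]; module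
    rw [dist_eq_norm, h, norm_smul, Real.norm_eq_abs, ← dist_eq_norm, dAC]
    rw [abs_of_nonneg (by norm_num : (0:ℝ) ≤ 2⁻¹)]; ring
  have dmAmB : dist mA mB = c / 2 := by
    have h : mA - mB = (2⁻¹ : ℝ) • (B - A) := by
      rw [hmA, hmB, midpoint_eq_smul_add, midpoint_eq_smul_add, invOf_eq_inv]; module
    rw [dist_eq_norm, h, norm_smul, Real.norm_eq_abs, ← dist_eq_norm, dBA]
    rw [abs_of_nonneg (by norm_num : (0:ℝ) ≤ 2⁻¹)]; ring
  have dmBmA : dist mB mA = c / 2 := by rw [dist_comm]; exact dmAmB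
  have dmAmC : dist mA mC = b / 2 := by rw [dist_comm]; exact dmCmA
  have dmCmB : dist mC mB = a / 2 := by rw [dist_comm]; exact dmBmC
  obtain ⟨N, hN⟩ : ∃ P : EuclideanSpace ℝ (Fin 2),
      P = (α / W) • mA + (β / W) • mB + (γ / W) • mC := ⟨_, rfl⟩
  have hsumN : α / W + β / W + γ / W = 1 := by
    rw [← add_div, ← add_div, ← hW]; field_simp
  have hNmA : dist mA N ^ 2 = a ^ 2 * b ^ 2 * c ^ 2 / (4 * W) := by
    have h := bary_dist mA mA mB mC _ _ _ hsumN
    rw [← hN, dist_self, dmAmB, dmAmC, dmBmC, dmCmA] at h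
    rw [h, hα, hβ, hγ] at *
    rw [hWval]
    field_simp
    ring
  have hNmB : dist mB N ^ 2 = a ^ 2 * b ^ 2 * c ^ 2 / (4 * W) := by
    have h := bary_dist mB mA mB mC _ _ _ hsumN
    rw [← hN, dist_self, dmBmA, dmBmC, dmCmA, dmAmB] at h
    rw [h, hα, hβ, hγ, hWval]
    field_simp
    ring
  have hNmC : dist mC N ^ 2 = a ^ 2 * b ^ 2 * c ^ 2 / (4 * W) := by
    have h := bary_dist mC mA mB mC _ _ _ hsumN
    rw [← hN, dist_self, dmCmA, dmCmB, dmBmC, dmAmB] at h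
    rw [h, hα, hβ, hγ, hWval]
    field_simp
    ring
  -- n coincides with the nine-point center N
  have hnN : n = N := by
    have hq1 : dist n mA = ρ := by rw [hmA]; exact hn1
    have hq2 : dist n mB = ρ := by rw [hmB]; exact hn2
    have hq3 : dist n mC = ρ := by rw [hmC]; exact hn3
    have hp1 : ⟪n - N, mB - mA⟫ = 0 := by
      have hd := inner_diff n N mA mB
      rw [dist_comm N mA, dist_comm N mB, hq1, hq2, hNmA, hNmB] at hd
      linarith
    have hp2 : ⟪n - N, mC - mA⟫ = 0 := by
      have hd := inner_diff n N mA mC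
      rw [dist_comm N mA, dist_comm N mC, hq1, hq3, hNmA, hNmC] at hd
      linarith
    have hv1 : B - A = (-2 : ℝ) • (mB - mA) := by
      rw [hmA, hmB, midpoint_eq_smul_add, midpoint_eq_smul_add, invOf_eq_inv]; module
    have hv2 : C - A = (-2 : ℝ) • (mC - mA) := by
      rw [hmA, hmC, midpoint_eq_smul_add, midpoint_eq_smul_add, invOf_eq_inv]; module
    have hp1' : ⟪n - N, B - A⟫ = 0 := by
      rw [hv1, real_inner_smul_right, hp1, mul_zero]
    have hp2' : ⟪n - N, C - A⟫ = 0 := by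
      rw [hv2, real_inner_smul_right, hp2, mul_zero]
    exact sub_eq_zero.mp (span_two hABC hp1' hp2')
  have hρ2 : ρ ^ 2 = a ^ 2 * b ^ 2 * c ^ 2 / (4 * W) := by
    have : dist n mA = ρ := by rw [hmA]; exact hn1
    rw [← hNmA, ← hnN, dist_comm, this]
  -- the product of the radii
  have hρr : ρ * r = a * b * c / (4 * (a + b + c)) := by
    refine sq_cancel (by positivity) (by positivity) ?_
    rw [mul_pow, hρ2, hr2, hWval]
    field_simp
  -- Euler-type inequality : r ≤ ρ
  have hEuler : r ≤ ρ := by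
    have key := euler_key hta htb htc
    have hsq : r ^ 2 ≤ ρ ^ 2 := by
      rw [hρ2, hr2, hWval, div_le_div_iff₀ (by positivity) (by positivity)]
      have h4 := mul_le_mul_of_nonneg_left key (by positivity : (0:ℝ) ≤ 4 * (a + b + c))
      linarith [h4]
    exact le_of_sq_le hr hρ hsq
  subst hξ hη hζ hs
  -- positivity of s
  have hspos : 0 < (b - c) ^ 2 * (b + c - a) + (a - c) ^ 2 * (a + c - b)
      + (a - b) ^ 2 * (a + b - c) := by
    have h10 : 0 ≤ (b - c) ^ 2 * (b + c - a) := by positivity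
    have h20 : 0 ≤ (a - c) ^ 2 * (a + c - b) := by positivity
    have h30 : 0 ≤ (a - b) ^ 2 * (a + b - c) := by positivity
    have key : b ≠ c ∨ a ≠ c ∨ a ≠ b := by
      by_contra hcon
      push_neg at hcon
      obtain ⟨k1, k2, k3⟩ := hcon
      refine hnoneq ⟨?_, ?_⟩
      · rw [← hc]; rw [← ha]; linarith
      · rw [← ha]; rw [← hb]; linarith
    rcases key with h | h | h
    · have h4 : 0 < |b - c| := abs_pos.mpr (sub_ne_zero.mpr h)
      have h5 : 0 < (b - c) ^ 2 := by rw [← sq_abs]; positivity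
      linarith [mul_pos h5 hta, h20, h30]
    · have h4 : 0 < |a - c| := abs_pos.mpr (sub_ne_zero.mpr h)
      have h5 : 0 < (a - c) ^ 2 := by rw [← sq_abs]; positivity
      linarith [mul_pos h5 htb, h10, h30]
    · have h4 : 0 < |a - b| := abs_pos.mpr (sub_ne_zero.mpr h)
      have h5 : 0 < (a - b) ^ 2 := by rw [← sq_abs]; positivity
      linarith [mul_pos h5 htc, h10, h20]
  have hsne : ((b - c) ^ 2 * (b + c - a) + (a - c) ^ 2 * (a + c - b)
      + (a - b) ^ 2 * (a + b - c)) ≠ 0 := ne_of_gt hspos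
  have hsumZ : (b - c) ^ 2 * (b + c - a) / ((b - c) ^ 2 * (b + c - a) + (a - c) ^ 2 * (a + c - b)
        + (a - b) ^ 2 * (a + b - c))
      + (a - c) ^ 2 * (a + c - b) / ((b - c) ^ 2 * (b + c - a) + (a - c) ^ 2 * (a + c - b)
        + (a - b) ^ 2 * (a + b - c))
      + (a - b) ^ 2 * (a + b - c) / ((b - c) ^ 2 * (b + c - a) + (a - c) ^ 2 * (a + c - b)
        + (a - b) ^ 2 * (a + b - c)) = 1 := by
    field_simp
  refine ⟨?_, ?_, ?_⟩
  · -- Z lies on the nine-point circle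
    refine sq_cancel dist_nonneg hρ.le ?_
    have h := bary_dist n A B C _ _ _ hsumZ
    rw [← hZ, hnA, hnB, hnC, dBC, dCA, dAB] at h
    rw [h]
    field_simp
    ring
  · -- Z lies on the incircle
    refine sq_cancel dist_nonneg hr.le ?_
    have h := bary_dist Q A B C _ _ _ hsumZ
    rw [← hZ, hQA, hQB, hQC, dBC, dCA, dAB] at h
    rw [h]
    field_simp
    ring
  · -- internal tangency
    have hNABC : N = ((β + γ) / (2 * W)) • A + ((γ + α) / (2 * W)) • B
        + ((α + β) / (2 * W)) • C := by
      rw [hN, hmA, hmB, hmC, midpoint_eq_smul_add, midpoint_eq_smul_add, midpoint_eq_smul_add,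
        invOf_eq_inv, hW]
      match_scalars <;> field_simp <;> ring
    have hsumL : (β + γ) / (2 * W) + (γ + α) / (2 * W) + (α + β) / (2 * W) = 1 := by
      rw [← add_div, ← add_div]
      rw [show β + γ + (γ + α) + (α + β) = 2 * (α + β + γ) by ring, ← hW]
      field_simp
    have hQN2 : dist Q N ^ 2 = (ρ - r) ^ 2 := by
      have h := bary_dist Q A B C _ _ _ hsumL
      rw [← hNABC, hQA, hQB, hQC, dBC, dCA, dAB] at h
      have hrr : (ρ - r) ^ 2 = ρ ^ 2 - 2 * (ρ * r) + r ^ 2 := by ring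
      rw [h, hrr, hρ2, hρr, hr2, hα, hβ, hγ, hWval]
      field_simp
      ring
    refine sq_cancel dist_nonneg (by linarith) ?_
    rw [hnN, dist_comm]
    exact hQN2
end
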